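/- arXiv:1004.2133 — 5 statements merged into one kernel-verified Lean document; each statement's English description precedes it below -/
import Mathlib

section
/- Let α ∈ (1,2), p ∈ (1,α), c > 0, b > 0 and a₀ ∈ ℝ. If F and G both belong to the class S_b, both satisfy the fractional integro-differential equation z F'(z) + (c/(α−1)) ∫₀^z F''(x) (z−x)^{1−α} dx − p F(z) = 0 for all z ∈ (0,b], and F(0) = G(0) = a₀, then F(z) = G(z) for all z ∈ [0,b]. -/
open Set Filter MeasureTheory Asymptotics Topology

noncomputable section

/-- The class `S_b`: `F` is continuously differentiable on `[0,b]`, twice continuously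
differentiable on `(0,b]`, `|F''(z)| = O(z^(α-2))` as `z ↓ 0`, and `F'(0) = 0`. -/
def MemS (α b : ℝ) (F : ℝ → ℝ) : Prop :=
  (∀ z ∈ Set.Icc (0:ℝ) b, DifferentiableAt ℝ F z) ∧
  ContinuousOn (deriv F) (Set.Icc 0 b) ∧
  (∀ z ∈ Set.Ioc (0:ℝ) b, DifferentiableAt ℝ (deriv F) z) ∧
  ContinuousOn (deriv (deriv F)) (Set.Ioc 0 b) ∧
  (deriv (deriv F)) =O[𝓝[>] (0:ℝ)] (fun z => z ^ (α - 2)) ∧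
  deriv F 0 = 0

/-- The fractional integro-differential equation
`z F'(z) + (c/(α−1)) ∫₀^z F''(x) (z−x)^{1−α} dx − p F(z) = 0`. -/
def FracDE (α p c : ℝ) (F : ℝ → ℝ) (z : ℝ) : Prop :=
  z * deriv F z
      + (c / (α - 1)) * (∫ x in (0:ℝ)..z, deriv (deriv F) x * (z - x) ^ (1 - α))
      - p * F z = 0

/-! Multiplying the equation at `x` by `(z - x) ^ (α - 2)` and integrating over `x ∈ (0, z)` gives,
by Fubini and the Beta integral `∫ x in u..z, (z - x) ^ (α - 2) * (x - u) ^ (1 - α) = B`, the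
Volterra equation `κ F'(z) = ∫ x in 0..z, (p F(x) - x F'(x)) (z - x) ^ (α - 2)` with
`κ = c B / (α - 1) > 0`. The difference of two solutions satisfies it with zero initial data. Its
kernel is integrable, so if `F' - G'` vanishes on `[0, s]`, then on `[s, s + δ]` the maximum of
`|F' - G'|` is at most `θ(δ)` times itself, where `θ(δ) → 0` as `δ → 0`; stepping `δ` at a time
exhausts `[0, b]`. -/

lemma intervalIntegrable_sub_rpow {r : ℝ} (hr : -1 < r) (z a c : ℝ) :
    IntervalIntegrable (fun x => (z - x) ^ r) volume a c := by
  simpa using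
    (intervalIntegral.intervalIntegrable_rpow' hr (a := z - a) (b := z - c)).comp_sub_left z

lemma intervalIntegrable_sub_rpow_mul_sub_rpow {r s u z : ℝ} (hr : -1 < r) (hs : -1 < s)
    (huz : u < z) :
    IntervalIntegrable (fun x => (z - x) ^ r * (x - u) ^ s) volume u z := by
  obtain ⟨m, hum, hmz⟩ := exists_between huz
  have hleft : IntervalIntegrable (fun x => (x - u) ^ s) volume u m := by
    simpa using
      (intervalIntegral.intervalIntegrable_rpow' hs (a := 0) (b := m - u)).comp_sub_right u
  refine (hleft.continuousOn_mul ?_).trans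
    ((intervalIntegrable_sub_rpow hr z m z).mul_continuousOn ?_)
  · rw [uIcc_of_le hum.le]
    exact ContinuousOn.rpow_const (by fun_prop) fun x hx => Or.inl (by linarith [hx.2])
  · rw [uIcc_of_le hmz.le]
    exact ContinuousOn.rpow_const (by fun_prop) fun x hx => Or.inl (by linarith [hx.1])

lemma integral_sub_rpow {r : ℝ} (hr : -1 < r) (s z : ℝ) :
    ∫ x in s..z, (z - x) ^ r = (z - s) ^ (r + 1) / (r + 1) := by
  rw [intervalIntegral.integral_comp_sub_left (fun x => x ^ r), sub_self,
    integral_rpow (Or.inl hr), Real.zero_rpow (by linarith), sub_zero]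

lemma integral_sub_rpow_mul_sub_rpow {r s u z : ℝ} (huz : u < z) :
    ∫ x in u..z, (z - x) ^ r * (x - u) ^ s
      = (z - u) ^ (r + s + 1) * ∫ t in (0:ℝ)..1, (1 - t) ^ r * t ^ s := by
  have hzu : 0 < z - u := sub_pos.mpr huz
  have hsub := intervalIntegral.mul_integral_comp_mul_add (a := 0) (b := 1)
    (f := fun x => (z - x) ^ r * (x - u) ^ s) (z - u) u
  simp only [mul_zero, zero_add, mul_one, sub_add_cancel] at hsub
  rw [← hsub,
    intervalIntegral.integral_congr (g := fun t => (z - u) ^ (r + s) * ((1 - t) ^ r * t ^ s)),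
    intervalIntegral.integral_const_mul, Real.rpow_add_one hzu.ne']
  · ring
  intro t ht
  rw [uIcc_of_le zero_le_one] at ht
  have h1 : z - ((z - u) * t + u) = (z - u) * (1 - t) := by ring
  simp only [h1, add_sub_cancel_right]
  rw [Real.mul_rpow hzu.le (by linarith [ht.2]), Real.mul_rpow hzu.le ht.1, Real.rpow_add hzu]
  ring

lemma integral_one_sub_rpow_mul_rpow_pos {r s : ℝ} (hr : -1 < r) (hs : -1 < s) :
    0 < ∫ t in (0:ℝ)..1, (1 - t) ^ r * t ^ s := by
  refine intervalIntegral.intervalIntegral_pos_of_pos_on ?_ (fun t ht => ?_) zero_lt_one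
  · simpa using intervalIntegrable_sub_rpow_mul_sub_rpow hr hs zero_lt_one
  · exact mul_pos (Real.rpow_pos_of_pos (by linarith [ht.2]) r) (Real.rpow_pos_of_pos ht.1 s)

lemma setIntegral_Ioo_indicator_Iic {a x z : ℝ} (hax : a ≤ x) (hxz : x < z) (h : ℝ → ℝ) :
    ∫ u in Ioo a z, (Iic x).indicator h u = ∫ u in a..x, h u := by
  have hset : Ioo a z ∩ Iic x = Ioc a x :=
    Set.ext fun _ => ⟨fun h => ⟨h.1.1, h.2⟩, fun h => ⟨⟨h.1, h.2.trans_lt hxz⟩, h.2⟩⟩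
  rw [setIntegral_indicator measurableSet_Iic, hset, intervalIntegral.integral_of_le hax]

lemma setIntegral_Ioo_indicator_Ici {a u z : ℝ} (hau : a < u) (huz : u ≤ z) (h : ℝ → ℝ) :
    ∫ x in Ioo a z, (Ici u).indicator h x = ∫ x in u..z, h x := by
  have hset : Ioo a z ∩ Ici u = Ico u z :=
    Set.ext fun _ => ⟨fun h => ⟨h.2, h.1.2⟩, fun h => ⟨⟨hau.trans_le h.1, h.2⟩, h.1⟩⟩
  rw [setIntegral_indicator measurableSet_Ici, hset, intervalIntegral.integral_of_le huz,
    integral_Ico_eq_integral_Ioo, integral_Ioc_eq_integral_Ioo]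

theorem integral_abel_kernel_comp {r s z : ℝ} (hr : -1 < r) (hs : -1 < s) (hrs : r + s + 1 = 0)
    (hz : 0 < z) {f : ℝ → ℝ} (hf : IntegrableOn f (Ioc 0 z)) :
    ∫ x in 0..z, (z - x) ^ r * ∫ u in 0..x, f u * (x - u) ^ s
      = (∫ t in (0:ℝ)..1, (1 - t) ^ r * t ^ s) * ∫ u in 0..z, f u := by
  set μ := volume.restrict (Ioo 0 z)
  set B := ∫ t in (0:ℝ)..1, (1 - t) ^ r * t ^ s
  set k : ℝ → ℝ → ℝ := fun x u => (z - x) ^ r * (x - u) ^ s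
  have hk : ∀ u ∈ Ioo 0 z, ∫ x in u..z, k x u = B := fun u hu => by
    rw [integral_sub_rpow_mul_sub_rpow hu.2, hrs, Real.rpow_zero, one_mul]
  let Φ : ℝ × ℝ → ℝ := {q | q.2 ≤ q.1}.indicator fun q => f q.2 * k q.1 q.2
  have hΦx : ∀ x, (fun u => Φ (x, u)) = (Iic x).indicator fun u => f u * k x u := fun _ => rfl
  have hΦu : ∀ u, (fun x => Φ (x, u)) = (Ici u).indicator fun x => f u * k x u := fun _ => rfl
  have hfμ : Integrable f μ := hf.mono_set Ioo_subset_Ioc_self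
  have hΦm : AEStronglyMeasurable Φ (μ.prod μ) := by
    refine AEStronglyMeasurable.indicator ?_ (measurableSet_le measurable_snd measurable_fst)
    exact hfμ.aestronglyMeasurable.comp_snd.mul (by fun_prop)
  have hk_int : ∀ u ∈ Ioo 0 z, IntegrableOn (fun x => f u * k x u) (Ico u z) := by
    intro u hu
    have h := ((intervalIntegrable_sub_rpow_mul_sub_rpow hr hs hu.2).const_mul (f u)).1
    rw [integrableOn_Ico_iff_integrableOn_Ioo]
    exact h.mono_set Ioo_subset_Ioc_self
  have hΦu_int : ∀ u ∈ Ioo 0 z, ∫ x, Φ (x, u) ∂μ = f u * B := fun u hu => by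
    rw [hΦu, setIntegral_Ioo_indicator_Ici hu.1 hu.2.le, intervalIntegral.integral_const_mul,
      hk u hu]
  have hΦu_norm : ∀ u ∈ Ioo 0 z, ∫ x, ‖Φ (x, u)‖ ∂μ = ‖f u‖ * B := fun u hu => by
    change ∫ x, ‖(Ici u).indicator (fun x => f u * k x u) x‖ ∂μ = _
    simp_rw [norm_indicator_eq_indicator_norm]
    rw [setIntegral_Ioo_indicator_Ici hu.1 hu.2.le, ← hk u hu,
      ← intervalIntegral.integral_const_mul]
    refine intervalIntegral.integral_congr fun x hx => ?_
    rw [uIcc_of_le hu.2.le] at hx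
    rw [norm_mul, Real.norm_of_nonneg (mul_nonneg (Real.rpow_nonneg (by linarith [hx.2]) r)
      (Real.rpow_nonneg (by linarith [hx.1]) s))]
  have hΦ : Integrable Φ (μ.prod μ) := by
    refine (integrable_prod_iff' hΦm).2 ⟨?_, ?_⟩
    · filter_upwards [ae_restrict_mem measurableSet_Ioo] with u hu
      rw [hΦu, integrable_indicator_iff measurableSet_Ici, IntegrableOn,
        Measure.restrict_restrict measurableSet_Ici]
      exact (hk_int u hu).mono_set fun x hx => ⟨hx.1, hx.2.2⟩
    · refine (hfμ.norm.mul_const B).congr ?_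
      filter_upwards [ae_restrict_mem measurableSet_Ioo] with u hu
      exact (hΦu_norm u hu).symm
  calc ∫ x in 0..z, (z - x) ^ r * ∫ u in 0..x, f u * (x - u) ^ s
      = ∫ x, ∫ u, Φ (x, u) ∂μ ∂μ := by
        rw [intervalIntegral.integral_of_le hz.le, integral_Ioc_eq_integral_Ioo]
        refine setIntegral_congr_fun measurableSet_Ioo fun x hx => ?_
        rw [hΦx, setIntegral_Ioo_indicator_Iic hx.1.le hx.2,
          ← intervalIntegral.integral_const_mul]
        exact intervalIntegral.integral_congr fun u _ => by ring
    _ = ∫ u, ∫ x, Φ (x, u) ∂μ ∂μ := integral_integral_swap hΦ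
    _ = ∫ u in Ioo 0 z, f u * B := setIntegral_congr_fun measurableSet_Ioo hΦu_int
    _ = B * ∫ u in 0..z, f u := by
        rw [integral_mul_const, intervalIntegral.integral_of_le hz.le,
          integral_Ioc_eq_integral_Ioo, mul_comm]

lemma abs_integral_mul_sub_rpow_le {r s z N : ℝ} {g : ℝ → ℝ} (hr : -1 < r) (hs : 0 ≤ s)
    (hsz : s ≤ z) (hg : ContinuousOn g (Icc 0 z)) (hg0 : ∀ x ∈ Icc 0 s, g x = 0)
    (hN : ∀ x ∈ Icc s z, |g x| ≤ N) :
    |∫ x in 0..z, g x * (z - x) ^ r| ≤ N * ((z - s) ^ (r + 1) / (r + 1)) := by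
  have hint : ∀ a c, 0 ≤ a → a ≤ c → c ≤ z →
      IntervalIntegrable (fun x => g x * (z - x) ^ r) volume a c := fun a c ha hac hc =>
    (intervalIntegrable_sub_rpow hr z a c).continuousOn_mul
      (hg.mono (by rw [uIcc_of_le hac]; exact Icc_subset_Icc ha hc))
  have hleft : ∫ x in 0..s, g x * (z - x) ^ r = 0 := by
    rw [intervalIntegral.integral_congr (g := fun _ => 0) fun x hx => by
      rw [uIcc_of_le hs] at hx; simp [hg0 x hx], intervalIntegral.integral_zero]
  rw [← intervalIntegral.integral_add_adjacent_intervals (hint 0 s le_rfl hs hsz)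
    (hint s z hs hsz le_rfl), hleft, zero_add, ← integral_sub_rpow hr s z,
    ← intervalIntegral.integral_const_mul, ← Real.norm_eq_abs]
  refine intervalIntegral.norm_integral_le_of_norm_le hsz
    (Eventually.of_forall fun x hx => ?_) ((intervalIntegrable_sub_rpow hr z s z).const_mul N)
  have hk : 0 ≤ (z - x) ^ r := Real.rpow_nonneg (by linarith [hx.2]) r
  rw [norm_mul, Real.norm_of_nonneg hk, Real.norm_eq_abs]
  exact mul_le_mul_of_nonneg_right (hN x ⟨hx.1.le, hx.2⟩) hk

lemma eq_zero_of_forall_abs_le_mul_bound {f : ℝ → ℝ} {s t θ : ℝ} (hf : ContinuousOn f (Icc s t))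
    (hθ : θ < 1) (hfs : f s = 0)
    (h : ∀ M, (∀ y ∈ Icc s t, |f y| ≤ M) → ∀ z ∈ Ioc s t, |f z| ≤ θ * M) :
    ∀ z ∈ Icc s t, f z = 0 := by
  intro z hz
  obtain ⟨x₀, hx₀, hmax⟩ := isCompact_Icc.exists_isMaxOn ⟨z, hz⟩ hf.abs
  have hM : ∀ y ∈ Icc s t, |f y| ≤ |f x₀| := fun y hy => hmax hy
  have hM0 : |f x₀| ≤ 0 := by
    rcases hx₀.1.eq_or_lt with hs | hs
    · rw [← hs, hfs, abs_zero]
    · nlinarith [h _ hM x₀ ⟨hs, hx₀.2⟩, abs_nonneg (f x₀)]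
  exact abs_nonpos_iff.mp ((hM z hz).trans hM0)

lemma eq_zero_of_hasDerivAt_of_eq_zero {D d : ℝ → ℝ} {s : ℝ}
    (hD : ∀ x ∈ Icc 0 s, HasDerivAt D (d x) x) (hd : ∀ x ∈ Icc 0 s, d x = 0) (hD0 : D 0 = 0) :
    ∀ y ∈ Icc 0 s, D y = 0 := fun y hy => by
  simpa [hD0] using norm_image_sub_le_of_norm_deriv_le_segment' (C := 0)
    (fun u hu => (hD u hu).hasDerivWithinAt)
    (fun u hu => by simp [hd u (Ico_subset_Icc_self hu)]) y hy

section Volterra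

variable {r p κ b : ℝ} {D d : ℝ → ℝ}

lemma abs_le_of_volterra (hr : -1 < r) (hκ : κ ≠ 0) (hD : ∀ x ∈ Icc 0 b, HasDerivAt D (d x) x)
    (hd : ContinuousOn d (Icc 0 b))
    (heq : ∀ z ∈ Ioc 0 b, κ * d z = ∫ x in 0..z, (p * D x - x * d x) * (z - x) ^ r)
    {s t δ M : ℝ} (hs : 0 ≤ s) (htb : t ≤ b) (htδ : t ≤ s + δ)
    (hzero : ∀ y ∈ Icc 0 s, D y = 0 ∧ d y = 0) (hM : ∀ y ∈ Icc s t, |d y| ≤ M)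
    {z : ℝ} (hz : z ∈ Ioc s t) :
    |d z| ≤ |κ|⁻¹ * ((|p| * δ + b) * (δ ^ (r + 1) / (r + 1))) * M := by
  have hst : Icc s t ⊆ Icc 0 b := Icc_subset_Icc hs htb
  have hzb : z ∈ Ioc 0 b := ⟨hs.trans_lt hz.1, hz.2.trans htb⟩
  have hM0 : 0 ≤ M := (abs_nonneg _).trans (hM z (Ioc_subset_Icc_self hz))
  have hDM : ∀ y ∈ Icc s t, |D y| ≤ δ * M := fun y hy => by
    have h := norm_image_sub_le_of_norm_deriv_le_segment' (C := M)
      (fun u hu => (hD u (hst hu)).hasDerivWithinAt) (fun u hu => hM u (Ico_subset_Icc_self hu))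
      y hy
    rw [(hzero s ⟨hs, le_rfl⟩).1, sub_zero, Real.norm_eq_abs] at h
    nlinarith [hy.2]
  have hgN : ∀ y ∈ Icc s z, |p * D y - y * d y| ≤ (|p| * δ + b) * M := fun y hy => by
    have hyt : y ∈ Icc s t := ⟨hy.1, hy.2.trans hz.2⟩
    have hy0 : 0 ≤ y := hs.trans hy.1
    calc |p * D y - y * d y| ≤ |p| * |D y| + y * |d y| := by
          simpa [abs_mul, abs_of_nonneg hy0] using abs_sub (p * D y) (y * d y)
      _ ≤ |p| * (δ * M) + b * M :=
          add_le_add (mul_le_mul_of_nonneg_left (hDM y hyt) (abs_nonneg p))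
            (mul_le_mul (hst hyt).2 (hM y hyt) (abs_nonneg _) (hy0.trans (hst hyt).2))
      _ = (|p| * δ + b) * M := by ring
  have hDc : ContinuousOn D (Icc 0 b) := fun y hy => (hD y hy).continuousAt.continuousWithinAt
  have hg : ContinuousOn (fun y => p * D y - y * d y) (Icc 0 z) :=
    ((continuousOn_const.mul hDc).sub (continuousOn_id.mul hd)).mono (Icc_subset_Icc_right hzb.2)
  have hint := abs_integral_mul_sub_rpow_le hr hs hz.1.le hg
    (fun y hy => by simp [(hzero y hy).1, (hzero y hy).2]) hgN
  rw [← heq z hzb] at hint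
  calc |d z| = |κ|⁻¹ * |κ * d z| := by rw [abs_mul, inv_mul_cancel_left₀ (abs_ne_zero.2 hκ)]
    _ ≤ |κ|⁻¹ * ((|p| * δ + b) * M * ((z - s) ^ (r + 1) / (r + 1))) := by gcongr
    _ ≤ |κ|⁻¹ * ((|p| * δ + b) * M * (δ ^ (r + 1) / (r + 1))) := by
        have hδ : 0 ≤ δ := by linarith [hz.1, hz.2]
        have hN : 0 ≤ (|p| * δ + b) * M := by
          have : 0 ≤ b := hzb.1.le.trans hzb.2
          positivity
        gcongr <;> linarith [hz.1, hz.2]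
    _ = |κ|⁻¹ * ((|p| * δ + b) * (δ ^ (r + 1) / (r + 1))) * M := by ring

lemma volterra_step (hr : -1 < r) (hκ : κ ≠ 0) (hD : ∀ x ∈ Icc 0 b, HasDerivAt D (d x) x)
    (hd : ContinuousOn d (Icc 0 b)) (hD0 : D 0 = 0)
    (heq : ∀ z ∈ Ioc 0 b, κ * d z = ∫ x in 0..z, (p * D x - x * d x) * (z - x) ^ r)
    {s δ : ℝ} (hs : 0 ≤ s) (hθ : |κ|⁻¹ * ((|p| * δ + b) * (δ ^ (r + 1) / (r + 1))) < 1)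
    (hzero : ∀ x ∈ Icc 0 b, x ≤ s → d x = 0) :
    ∀ x ∈ Icc 0 b, x ≤ s + δ → d x = 0 := by
  intro x hx hxsδ
  rcases le_or_gt x s with hxs | hsx
  · exact hzero x hx hxs
  have hsb : Icc 0 s ⊆ Icc 0 b := Icc_subset_Icc le_rfl (hsx.le.trans hx.2)
  have hzero' : ∀ y ∈ Icc 0 s, D y = 0 ∧ d y = 0 := fun y hy =>
    ⟨eq_zero_of_hasDerivAt_of_eq_zero (fun u hu => hD u (hsb hu))
      (fun u hu => hzero u (hsb hu) hu.2) hD0 y hy, hzero y (hsb hy) hy.2⟩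
  have hst : Icc s (min b (s + δ)) ⊆ Icc 0 b := Icc_subset_Icc hs (min_le_left _ _)
  exact eq_zero_of_forall_abs_le_mul_bound (hd.mono hst) hθ (hzero' s ⟨hs, le_rfl⟩).2
    (fun M hM z hz => abs_le_of_volterra hr hκ hD hd heq hs (min_le_left _ _) (min_le_right _ _)
      hzero' hM hz) x ⟨hsx.le, le_min hx.2 hxsδ⟩

theorem eq_zero_of_volterra (hr : -1 < r) (hκ : κ ≠ 0) (hD : ∀ x ∈ Icc 0 b, HasDerivAt D (d x) x)
    (hd : ContinuousOn d (Icc 0 b)) (hD0 : D 0 = 0) (hd0 : d 0 = 0)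
    (heq : ∀ z ∈ Ioc 0 b, κ * d z = ∫ x in 0..z, (p * D x - x * d x) * (z - x) ^ r) :
    ∀ x ∈ Icc 0 b, D x = 0 := by
  set θ : ℝ → ℝ := fun δ => |κ|⁻¹ * ((|p| * δ + b) * (δ ^ (r + 1) / (r + 1)))
  have hθ0 : ContinuousAt θ 0 := by
    have : ContinuousAt (fun δ : ℝ => δ ^ (r + 1)) 0 :=
      Real.continuousAt_rpow_const _ _ (Or.inr (by linarith))
    fun_prop
  obtain ⟨δ, hθδ, hδ⟩ : ∃ δ, θ δ < 1 ∧ 0 < δ := by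
    refine ((hθ0.eventually (gt_mem_nhds ?_)).filter_mono nhdsWithin_le_nhds |>.and
      self_mem_nhdsWithin).exists (f := 𝓝[>] 0)
    simp [θ, Real.zero_rpow (by linarith : r + 1 ≠ 0)]
  have hd_zero : ∀ n : ℕ, ∀ x ∈ Icc 0 b, x ≤ n * δ → d x = 0 := by
    intro n
    induction n with
    | zero => exact fun x hx hxn => by rw [le_antisymm (by simpa using hxn) hx.1, hd0]
    | succ n ih =>
      intro x hx hxn
      exact volterra_step hr hκ hD hd hD0 heq (by positivity) hθδ ih x hx
        (by push_cast at hxn; linarith)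
  intro x hx
  obtain ⟨n, hn⟩ := exists_nat_ge (x / δ)
  exact eq_zero_of_hasDerivAt_of_eq_zero (fun u hu => hD u ⟨hu.1, hu.2.trans hx.2⟩)
    (fun u hu => hd_zero n u ⟨hu.1, hu.2.trans hx.2⟩ (hu.2.trans ((div_le_iff₀ hδ).1 hn))) hD0 x
    ⟨hx.1, le_rfl⟩

end Volterra

namespace MemS

variable {α b : ℝ} {F G : ℝ → ℝ}

lemma continuousOn (hF : MemS α b F) : ContinuousOn F (Icc 0 b) :=
  fun x hx => (hF.1 x hx).continuousAt.continuousWithinAt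

lemma integrableOn_deriv_deriv (hα : 1 < α) (hF : MemS α b F) :
    IntegrableOn (deriv (deriv F)) (Ioc 0 b) := by
  obtain ⟨S, hS, hSint⟩ : IntegrableAtFilter (deriv (deriv F)) (𝓝[>] 0) :=
    hF.2.2.2.2.1.integrableAtFilter
      (measurable_deriv _).stronglyMeasurable.stronglyMeasurableAtFilter
      ⟨Ioo 0 1, Ioo_mem_nhdsGT one_pos,
        (intervalIntegral.integrableOn_Ioo_rpow_iff (s := α - 2) one_pos).2 (by linarith)⟩
  obtain ⟨ε, hε : 0 < ε, hεS⟩ := mem_nhdsGT_iff_exists_Ioo_subset.1 hS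
  have hfar : IntegrableOn (deriv (deriv F)) (Icc (ε / 2) b) :=
    (hF.2.2.2.1.mono fun x hx => ⟨by linarith [hx.1], hx.2⟩).integrableOn_Icc
  refine ((hSint.mono_set hεS).union hfar).mono_set fun x hx => ?_
  by_cases h : x < ε
  · exact Or.inl ⟨hx.1, h⟩
  · exact Or.inr ⟨by linarith, hx.2⟩

lemma integral_deriv_deriv (hα : 1 < α) (hF : MemS α b F) {z : ℝ} (hz : z ∈ Icc 0 b) :
    ∫ x in 0..z, deriv (deriv F) x = deriv F z := by
  have hint : IntervalIntegrable (deriv (deriv F)) volume 0 z :=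
    (intervalIntegrable_iff_integrableOn_Ioc_of_le hz.1).2
      ((hF.integrableOn_deriv_deriv hα).mono_set (Ioc_subset_Ioc_right hz.2))
  rw [intervalIntegral.integral_eq_sub_of_hasDeriv_right_of_le hz.1
    (hF.2.1.mono (Icc_subset_Icc_right hz.2))
    (fun x hx => (hF.2.2.1 x ⟨hx.1, hx.2.le.trans hz.2⟩).hasDerivAt.hasDerivWithinAt) hint,
    hF.2.2.2.2.2, sub_zero]

lemma volterra_of_fracDE {p c : ℝ} (hα1 : 1 < α) (hα2 : α < 2) (hF : MemS α b F)
    (hFeq : ∀ z ∈ Ioc 0 b, FracDE α p c F z) {z : ℝ} (hz : z ∈ Ioc 0 b) :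
    c / (α - 1) * (∫ t in (0:ℝ)..1, (1 - t) ^ (α - 2) * t ^ (1 - α)) * deriv F z
      = ∫ x in 0..z, (p * F x - x * deriv F x) * (z - x) ^ (α - 2) := by
  rw [← hF.integral_deriv_deriv hα1 (Ioc_subset_Icc_self hz), mul_assoc,
    ← integral_abel_kernel_comp (by linarith) (by linarith) (by ring) hz.1
      ((hF.integrableOn_deriv_deriv hα1).mono_set (Ioc_subset_Ioc_right hz.2)),
    ← intervalIntegral.integral_const_mul]
  refine intervalIntegral.integral_congr_ae (Eventually.of_forall fun x hx => ?_)
  rw [uIoc_of_le hz.1.le] at hx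
  have hx_eq := hFeq x ⟨hx.1, hx.2.trans hz.2⟩
  unfold FracDE at hx_eq
  linear_combination (z - x) ^ (α - 2) * hx_eq

lemma volterra_sub_of_fracDE {p c : ℝ} (hα1 : 1 < α) (hα2 : α < 2) (hF : MemS α b F)
    (hG : MemS α b G) (hFeq : ∀ z ∈ Ioc 0 b, FracDE α p c F z)
    (hGeq : ∀ z ∈ Ioc 0 b, FracDE α p c G z) {z : ℝ} (hz : z ∈ Ioc 0 b) :
    c / (α - 1) * (∫ t in (0:ℝ)..1, (1 - t) ^ (α - 2) * t ^ (1 - α)) * (deriv F z - deriv G z)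
      = ∫ x in 0..z, (p * (F x - G x) - x * (deriv F x - deriv G x)) * (z - x) ^ (α - 2) := by
  have hint : ∀ {W : ℝ → ℝ}, MemS α b W →
      IntervalIntegrable (fun x => (p * W x - x * deriv W x) * (z - x) ^ (α - 2)) volume 0 z :=
    fun hW => (intervalIntegrable_sub_rpow (by linarith) z 0 z).continuousOn_mul
      (((continuousOn_const.mul hW.continuousOn).sub (continuousOn_id.mul hW.2.1)).mono
        (by rw [uIcc_of_le hz.1.le]; exact Icc_subset_Icc_right hz.2))
  rw [mul_sub, hF.volterra_of_fracDE hα1 hα2 hFeq hz, hG.volterra_of_fracDE hα1 hα2 hGeq hz,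
    ← intervalIntegral.integral_sub (hint hF) (hint hG)]
  exact intervalIntegral.integral_congr fun x _ => by ring

end MemS

theorem uniqueness_fractional_equation_general
    {α p c b a₀ : ℝ} (hα : α ∈ Set.Ioo (1:ℝ) 2)
    (hc : 0 < c) {F G : ℝ → ℝ}
    (hF : MemS α b F) (hG : MemS α b G)
    (hFeq : ∀ z ∈ Set.Ioc (0:ℝ) b, FracDE α p c F z)
    (hGeq : ∀ z ∈ Set.Ioc (0:ℝ) b, FracDE α p c G z)
    (hF0 : F 0 = a₀) (hG0 : G 0 = a₀) :
    ∀ z ∈ Set.Icc (0:ℝ) b, F z = G z := by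
  obtain ⟨hα1, hα2⟩ := hα
  have hκ : c / (α - 1) * (∫ t in (0:ℝ)..1, (1 - t) ^ (α - 2) * t ^ (1 - α)) ≠ 0 :=
    (mul_pos (div_pos hc (by linarith))
      (integral_one_sub_rpow_mul_rpow_pos (by linarith) (by linarith))).ne'
  intro z hz
  exact sub_eq_zero.1 (eq_zero_of_volterra (D := fun x => F x - G x) (by linarith) hκ
    (fun x hx => (hF.1 x hx).hasDerivAt.sub (hG.1 x hx).hasDerivAt) (hF.2.1.sub hG.2.1)
    (by simp [hF0, hG0]) (by simp [hF.2.2.2.2.2, hG.2.2.2.2.2])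
    (fun y hy => hF.volterra_sub_of_fracDE hα1 hα2 hG hFeq hGeq hy) z hz)

theorem uniqueness_fractional_equation
    {α p c b a₀ : ℝ} (hα : α ∈ Set.Ioo (1:ℝ) 2) (hp : p ∈ Set.Ioo 1 α)
    (hc : 0 < c) (hb : 0 < b) {F G : ℝ → ℝ}
    (hF : MemS α b F) (hG : MemS α b G)
    (hFeq : ∀ z ∈ Set.Ioc (0:ℝ) b, FracDE α p c F z)
    (hGeq : ∀ z ∈ Set.Ioc (0:ℝ) b, FracDE α p c G z)
    (hF0 : F 0 = a₀) (hG0 : G 0 = a₀) :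
    ∀ z ∈ Set.Icc (0:ℝ) b, F z = G z :=
  uniqueness_fractional_equation_general hα hc hF hG hFeq hGeq hF0 hG0
end
end

section
/- Let α ∈ (1,2), p ∈ (1,α), c > 0 and K ∈ ℝ. Define L(λ) = (K/(c Γ(−α))^{p/α}) · e^{c Γ(−α) λ^α} · λ^{−(1+p)} · Γ(1 + p/α, c Γ(−α) λ^α) for λ > 0. Then L is differentiable on (0,∞), satisfies the linear ordinary differential equation L'(λ) + ((1+p)/λ − (c Γ(2−α)/(α−1)) λ^{α−1}) L(λ) = −K (c Γ(2−α)/(α−1)) λ^{α−2} for all λ > 0, and L(λ) → 0 as λ → ∞. Moreover L is the unique such solution: if M is differentiable on (0,∞), satisfies the same differential equation for all λ > 0, and M(λ) → 0 as λ → ∞, then M = L on (0,∞). -/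
/-!
Put `β = c Γ(-α)`; it is positive because `Γ(2 - α) = α (α - 1) Γ(-α)`, and the same identity turns
the coefficient `c Γ(2 - α) / (α - 1)` into `α β`. Then `φ(λ) = λ^(1+p) e^(-β λ^α)` is an integrating
factor, `φ' = ((1 + p)/λ - α β λ^(α-1)) φ`, so the equation says `(φ y)' = -K α β λ^(α-2) φ`.
For the candidate, `φ L = K β^(-p/α) Γ(1 + p/α, β λ^α)`, and the chain rule with
`∂ₓΓ(a, x) = -x^(a-1) e^(-x)` gives exactly this derivative. Since `e^x Γ(a, x) ≤ x + 1` for `x ≥ 1`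
and `a ≤ 2`, `L = O(λ^(α-1-p)) → 0`. For two solutions, `φ (M - L)` has zero derivative and tends
to `0` (as `φ → 0`), so it vanishes.
-/

open Set Filter MeasureTheory Topology

noncomputable section

/-- The upper incomplete Gamma function `Γ(a,x) = ∫_x^∞ y^(a-1) e^(-y) dy`. -/
def upperGamma (a x : ℝ) : ℝ := ∫ y in Set.Ioi x, y ^ (a - 1) * Real.exp (-y)

section UpperGamma

open Real

variable {a : ℝ}

lemma integrableOn_rpow_mul_exp_neg_Ioi (ha : 0 < a) {x : ℝ} (hx : 0 ≤ x) :
    IntegrableOn (fun y : ℝ => y ^ (a - 1) * exp (-y)) (Ioi x) :=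
  ((GammaIntegral_convergent ha).mono_set (Ioi_subset_Ioi hx)).congr_fun
    (fun _ _ => mul_comm _ _) measurableSet_Ioi

lemma integrableOn_mul_exp_neg_Ioi {x : ℝ} (hx : 0 ≤ x) :
    IntegrableOn (fun y : ℝ => y * exp (-y)) (Ioi x) := by
  simpa [show (2 : ℝ) - 1 = 1 by norm_num] using
    integrableOn_rpow_mul_exp_neg_Ioi (a := 2) two_pos hx

lemma upperGamma_nonneg (a : ℝ) {x : ℝ} (hx : 0 ≤ x) : 0 ≤ upperGamma a x :=
  setIntegral_nonneg measurableSet_Ioi fun _ hy =>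
    mul_nonneg (rpow_nonneg (hx.trans hy.le) _) (exp_pos _).le

lemma upperGamma_eq_sub_intervalIntegral (ha : 0 < a) {x : ℝ} (hx : 0 ≤ x) :
    upperGamma a x = upperGamma a 0 - ∫ y in (0)..x, y ^ (a - 1) * exp (-y) := by
  have hint := integrableOn_rpow_mul_exp_neg_Ioi ha le_rfl
  rw [eq_sub_iff_add_eq, intervalIntegral.integral_of_le hx, upperGamma, upperGamma, add_comm,
    ← setIntegral_union (Ioc_disjoint_Ioi le_rfl) measurableSet_Ioi
      (hint.mono_set Ioc_subset_Ioi_self) (hint.mono_set (Ioi_subset_Ioi hx)),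
    Ioc_union_Ioi_eq_Ioi hx]

lemma hasDerivAt_upperGamma (ha : 0 < a) {x : ℝ} (hx : 0 < x) :
    HasDerivAt (upperGamma a) (-(x ^ (a - 1) * exp (-x))) x := by
  have hcont : ContinuousOn (fun y : ℝ => y ^ (a - 1) * exp (-y)) (Ioi 0) := fun y hy =>
    ((continuousAt_rpow_const _ _ (Or.inl (ne_of_gt hy))).mul
      (continuous_exp.comp continuous_neg).continuousAt).continuousWithinAt
  have hint : IntervalIntegrable (fun y : ℝ => y ^ (a - 1) * exp (-y)) volume 0 x :=
    (intervalIntegrable_iff_integrableOn_Ioc_of_le hx.le).2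
      ((integrableOn_rpow_mul_exp_neg_Ioi ha le_rfl).mono_set Ioc_subset_Ioi_self)
  refine ((intervalIntegral.integral_hasDerivAt_right hint
    (hcont.stronglyMeasurableAtFilter isOpen_Ioi x hx)
    (hcont.continuousAt (Ioi_mem_nhds hx))).const_sub (upperGamma a 0)).congr_of_eventuallyEq ?_
  filter_upwards [eventually_gt_nhds hx] with t ht
  exact upperGamma_eq_sub_intervalIntegral ha ht.le

lemma integral_Ioi_mul_exp_neg {x : ℝ} (hx : 0 ≤ x) :
    ∫ y in Ioi x, y * exp (-y) = (x + 1) * exp (-x) := by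
  have hderiv : ∀ y ∈ Ici x,
      HasDerivAt (fun y => -((y + 1) * exp (-y))) (y * exp (-y)) y := fun y _ => by
    have h : HasDerivAt (fun y => (y + 1) * exp (-y)) (1 * exp (-y) + (y + 1) * (exp (-y) * -1)) y :=
      ((hasDerivAt_id' y).add_const 1).mul (hasDerivAt_neg' y).exp
    exact h.fun_neg.congr_deriv (by ring)
  have hlim : Tendsto (fun y => -((y + 1) * exp (-y))) atTop (𝓝 0) := by
    simpa [add_mul] using
      ((tendsto_pow_mul_exp_neg_atTop_nhds_zero 1).add tendsto_exp_neg_atTop_nhds_zero).neg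
  rw [integral_Ioi_of_hasDerivAt_of_tendsto' hderiv (integrableOn_mul_exp_neg_Ioi hx) hlim]
  ring

lemma exp_mul_upperGamma_le (ha : 0 < a) (ha₂ : a ≤ 2) {x : ℝ} (hx : 1 ≤ x) :
    exp x * upperGamma a x ≤ x + 1 := by
  have hx0 : (0 : ℝ) ≤ x := zero_le_one.trans hx
  have hle : upperGamma a x ≤ (x + 1) * exp (-x) := by
    rw [← integral_Ioi_mul_exp_neg hx0]
    refine setIntegral_mono_on (integrableOn_rpow_mul_exp_neg_Ioi ha hx0)
      (integrableOn_mul_exp_neg_Ioi hx0) measurableSet_Ioi fun y hy => ?_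
    have hy : 1 ≤ y := hx.trans hy.le
    gcongr
    simpa using rpow_le_rpow_of_exponent_le hy (show a - 1 ≤ 1 by linarith)
  calc exp x * upperGamma a x ≤ exp x * ((x + 1) * exp (-x)) := by gcongr
    _ = x + 1 := by rw [exp_neg]; field_simp

end UpperGamma

section LinearODE

variable {φ q r M L : ℝ → ℝ} {a : ℝ}

lemma HasDerivAt.integratingFactor_mul {y : ℝ → ℝ} {q₀ y' x : ℝ}
    (hφ : HasDerivAt φ (q₀ * φ x) x) (hy : HasDerivAt y y' x) :
    HasDerivAt (fun t => φ t * y t) (φ x * (y' + q₀ * y x)) x :=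
  (hφ.mul hy).congr_deriv (by ring)

lemma eqOn_zero_of_hasDerivAt_zero_of_tendsto {f : ℝ → ℝ}
    (hf : ∀ x ∈ Ioi a, HasDerivAt f 0 x) (hlim : Tendsto f atTop (𝓝 0)) :
    EqOn f 0 (Ioi a) := by
  intro x hx
  have hconst : ∀ᶠ y in atTop, f x = f y :=
    (eventually_gt_atTop a).mono fun y hy =>
      isOpen_Ioi.is_const_of_deriv_eq_zero isPreconnected_Ioi
        (fun z hz => (hf z hz).differentiableAt.differentiableWithinAt)
        (fun z hz => (hf z hz).deriv) hx hy
  exact tendsto_nhds_unique (tendsto_const_nhds.congr' hconst) hlim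

theorem eqOn_of_linear_ode_of_tendsto_zero
    (hφ : ∀ x, a < x → HasDerivAt φ (q x * φ x) x) (hφ_ne : ∀ x, a < x → φ x ≠ 0)
    (hφ_bdd : IsBoundedUnder (· ≤ ·) atTop fun x => ‖φ x‖)
    (hM : ∀ x ∈ Ioi a, DifferentiableAt ℝ M x) (hL : ∀ x ∈ Ioi a, DifferentiableAt ℝ L x)
    (hMode : ∀ x, a < x → deriv M x + q x * M x = r x)
    (hLode : ∀ x, a < x → deriv L x + q x * L x = r x)
    (hMlim : Tendsto M atTop (𝓝 0)) (hLlim : Tendsto L atTop (𝓝 0)) :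
    EqOn M L (Ioi a) := by
  have hderiv : ∀ x ∈ Ioi a, HasDerivAt (fun t => φ t * (M t - L t)) 0 x := fun x hx => by
    have h := (hφ x hx).integratingFactor_mul ((hM x hx).hasDerivAt.fun_sub (hL x hx).hasDerivAt)
    have hzero : deriv M x - deriv L x + q x * (M x - L x) = 0 := by
      linear_combination hMode x hx - hLode x hx
    rwa [hzero, mul_zero] at h
  have hlim : Tendsto (fun t => φ t * (M t - L t)) atTop (𝓝 0) := by
    have hML : Tendsto (fun t => M t - L t) atTop (𝓝 0) := by simpa using hMlim.sub hLlim
    simpa [mul_comm] using hML.zero_mul_isBoundedUnder_le hφ_bdd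
  intro x hx
  simpa [sub_eq_zero, hφ_ne x hx] using eqOn_zero_of_hasDerivAt_zero_of_tendsto hderiv hlim hx

end LinearODE

section LaplaceSolution

open Real

variable {α β p : ℝ}

def integratingFactor (α β p x : ℝ) : ℝ := x ^ (1 + p) * exp (-(β * x ^ α))

def laplaceSolution (α β p K x : ℝ) : ℝ :=
  K / β ^ (p / α) * exp (β * x ^ α) * x ^ (-(1 + p)) * upperGamma (1 + p / α) (β * x ^ α)

lemma integratingFactor_pos {x : ℝ} (hx : 0 < x) : 0 < integratingFactor α β p x := by
  unfold integratingFactor; positivity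

lemma hasDerivAt_integratingFactor {x : ℝ} (hx : 0 < x) :
    HasDerivAt (integratingFactor α β p)
      (((1 + p) / x - α * β * x ^ (α - 1)) * integratingFactor α β p x) x := by
  have h := (hasDerivAt_rpow_const (p := 1 + p) (Or.inl hx.ne')).mul
    ((hasDerivAt_rpow_const (p := α) (Or.inl hx.ne')).const_mul β).fun_neg.exp
  refine h.congr_deriv ?_
  rw [integratingFactor, rpow_sub_one hx.ne']
  field_simp
  ring

lemma tendsto_integratingFactor_atTop (hα : 0 < α) (hβ : 0 < β) :
    Tendsto (integratingFactor α β p) atTop (𝓝 0) := by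
  refine ((tendsto_rpow_mul_exp_neg_mul_atTop_nhds_zero ((1 + p) / α) β hβ).comp
    (tendsto_rpow_atTop hα)).congr' ?_
  filter_upwards [eventually_gt_atTop 0] with x hx
  rw [Function.comp_apply, ← rpow_mul hx.le, mul_div_cancel₀ _ hα.ne', integratingFactor,
    neg_mul]

lemma integratingFactor_mul_laplaceSolution (K : ℝ) {x : ℝ} (hx : 0 < x) :
    integratingFactor α β p x * laplaceSolution α β p K x =
      K / β ^ (p / α) * upperGamma (1 + p / α) (β * x ^ α) := by
  have hx' : x ^ (1 + p) ≠ 0 := (rpow_pos_of_pos hx _).ne'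
  rw [integratingFactor, laplaceSolution, rpow_neg hx.le, exp_neg]
  field_simp

lemma hasDerivAt_upperGamma_rpow (K : ℝ) (hα : 0 < α) (hβ : 0 < β) (ha : 0 < 1 + p / α)
    {x : ℝ} (hx : 0 < x) :
    HasDerivAt (fun t => K / β ^ (p / α) * upperGamma (1 + p / α) (β * t ^ α))
      (integratingFactor α β p x * (-K * (α * β) * x ^ (α - 2))) x := by
  have h := ((hasDerivAt_upperGamma ha (by positivity : 0 < β * x ^ α)).comp x
    ((hasDerivAt_rpow_const (p := α) (Or.inl hx.ne')).const_mul β)).const_mul (K / β ^ (p / α))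
  refine h.congr_deriv ?_
  have hpow : (β * x ^ α) ^ (1 + p / α - 1) = β ^ (p / α) * x ^ p := by
    rw [add_sub_cancel_left, mul_rpow hβ.le (rpow_nonneg hx.le _), ← rpow_mul hx.le,
      mul_div_cancel₀ _ hα.ne']
  have hexp : x ^ p * x ^ (α - 1) = x ^ (1 + p) * x ^ (α - 2) := by
    rw [← rpow_add hx, ← rpow_add hx]; ring_nf
  have hK : K / β ^ (p / α) * β ^ (p / α) = K := div_mul_cancel₀ _ (by positivity)
  rw [hpow, integratingFactor]
  linear_combination (-(α * β * exp (-(β * x ^ α)) * (x ^ p * x ^ (α - 1)))) * hK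
    + (-(K * α * β * exp (-(β * x ^ α)))) * hexp

lemma differentiableAt_laplaceSolution (K : ℝ) (hβ : 0 < β) (ha : 0 < 1 + p / α) {x : ℝ}
    (hx : 0 < x) : DifferentiableAt ℝ (laplaceSolution α β p K) x := by
  have hu : DifferentiableAt ℝ (fun t => β * t ^ α) x :=
    ((hasDerivAt_rpow_const (Or.inl hx.ne')).const_mul β).differentiableAt
  exact ((hu.exp.const_mul _).mul (differentiableAt_id.rpow_const (Or.inl hx.ne'))).mul
    ((hasDerivAt_upperGamma ha (by positivity)).differentiableAt.comp x hu)

theorem laplaceSolution_ode (K : ℝ) (hα : 0 < α) (hβ : 0 < β) (ha : 0 < 1 + p / α) {x : ℝ}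
    (hx : 0 < x) :
    deriv (laplaceSolution α β p K) x
        + ((1 + p) / x - α * β * x ^ (α - 1)) * laplaceSolution α β p K x
      = -K * (α * β) * x ^ (α - 2) := by
  have hprod := (hasDerivAt_integratingFactor (α := α) (β := β) (p := p) hx).integratingFactor_mul
    (differentiableAt_laplaceSolution K hβ ha hx).hasDerivAt
  have hprod' := (hasDerivAt_upperGamma_rpow K hα hβ ha hx).congr_of_eventuallyEq
    (by filter_upwards [eventually_gt_nhds hx] with t ht
        using integratingFactor_mul_laplaceSolution (p := p) K ht)
  exact mul_left_cancel₀ (integratingFactor_pos hx).ne' (hprod.unique hprod')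

theorem tendsto_laplaceSolution_atTop (K : ℝ) (hα : 0 < α) (hβ : 0 < β) (hp : 0 ≤ p)
    (hpα : p ≤ α) (hαp : α < 1 + p) :
    Tendsto (laplaceSolution α β p K) atTop (𝓝 0) := by
  have hbound : Tendsto (fun x : ℝ => β * x ^ (α - (1 + p)) + x ^ (-(1 + p))) atTop (𝓝 0) := by
    simpa using ((tendsto_rpow_neg_atTop (sub_pos.2 hαp)).const_mul β).add
      (tendsto_rpow_neg_atTop (by linarith : (0 : ℝ) < 1 + p))
  have hg : Tendsto (fun x : ℝ =>
      x ^ (-(1 + p)) * (exp (β * x ^ α) * upperGamma (1 + p / α) (β * x ^ α))) atTop (𝓝 0) := by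
    refine squeeze_zero' ?_ ?_ hbound
    · filter_upwards [eventually_gt_atTop 0] with x hx
      have := upperGamma_nonneg (1 + p / α) (by positivity : 0 ≤ β * x ^ α)
      positivity
    · filter_upwards [eventually_gt_atTop 0,
        ((tendsto_rpow_atTop hα).const_mul_atTop hβ).eventually_ge_atTop 1] with x hx hu
      calc x ^ (-(1 + p)) * (exp (β * x ^ α) * upperGamma (1 + p / α) (β * x ^ α))
          ≤ x ^ (-(1 + p)) * (β * x ^ α + 1) := by
            gcongr
            exact exp_mul_upperGamma_le (by positivity)
              (by linarith [(div_le_one hα).2 hpα]) hu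
        _ = β * x ^ (α - (1 + p)) + x ^ (-(1 + p)) := by
            rw [sub_eq_add_neg, rpow_add hx]; ring
  simpa only [mul_zero] using
    (hg.const_mul (K / β ^ (p / α))).congr fun x => by rw [laplaceSolution]; ring

end LaplaceSolution

lemma Real.Gamma_two_sub {α : ℝ} (hα₀ : α ≠ 0) (hα₁ : α ≠ 1) :
    Real.Gamma (2 - α) = α * (α - 1) * Real.Gamma (-α) := by
  rw [show 2 - α = -α + 1 + 1 by ring, Real.Gamma_add_one (by contrapose! hα₁; linarith),
    Real.Gamma_add_one (neg_ne_zero.2 hα₀)]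
  ring

lemma Real.Gamma_neg_pos {α : ℝ} (hα : α ∈ Ioo 1 2) : 0 < Real.Gamma (-α) := by
  obtain ⟨hα₁, hα₂⟩ := hα
  have h := Real.Gamma_pos_of_pos (sub_pos.2 hα₂)
  rw [Real.Gamma_two_sub (by linarith) hα₁.ne'] at h
  exact pos_of_mul_pos_right h (by nlinarith)

theorem laplace_transform_ode_unique_solution
    {α p c K : ℝ} (hα : α ∈ Set.Ioo (1:ℝ) 2) (hp : p ∈ Set.Ioo 1 α) (hc : 0 < c) :
    let L : ℝ → ℝ := fun lam =>
      (K / (c * Real.Gamma (-α)) ^ (p / α)) *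
        Real.exp (c * Real.Gamma (-α) * lam ^ α) * lam ^ (-(1 + p)) *
        upperGamma (1 + p / α) (c * Real.Gamma (-α) * lam ^ α)
    (∀ lam ∈ Set.Ioi (0:ℝ), DifferentiableAt ℝ L lam) ∧
    (∀ lam : ℝ, 0 < lam →
      deriv L lam
          + ((1 + p) / lam - (c * Real.Gamma (2 - α) / (α - 1)) * lam ^ (α - 1)) * L lam
        = -K * (c * Real.Gamma (2 - α) / (α - 1)) * lam ^ (α - 2)) ∧
    Tendsto L atTop (𝓝 0) ∧
    (∀ M : ℝ → ℝ,
      (∀ lam ∈ Set.Ioi (0:ℝ), DifferentiableAt ℝ M lam) →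
      (∀ lam : ℝ, 0 < lam →
        deriv M lam
            + ((1 + p) / lam - (c * Real.Gamma (2 - α) / (α - 1)) * lam ^ (α - 1)) * M lam
          = -K * (c * Real.Gamma (2 - α) / (α - 1)) * lam ^ (α - 2)) →
      Tendsto M atTop (𝓝 0) →
      Set.EqOn M L (Set.Ioi 0)) := by
  intro L
  obtain ⟨hα₁, hα₂⟩ := hα
  obtain ⟨hp₁, hpα⟩ := hp
  have hα₀ : 0 < α := by linarith
  have hβ : 0 < c * Real.Gamma (-α) := mul_pos hc (Real.Gamma_neg_pos ⟨hα₁, hα₂⟩)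
  have ha : 0 < 1 + p / α := by positivity
  have hcoef : c * Real.Gamma (2 - α) / (α - 1) = α * (c * Real.Gamma (-α)) := by
    rw [Real.Gamma_two_sub hα₀.ne' hα₁.ne', div_eq_iff (sub_pos.2 hα₁).ne']
    ring
  rw [hcoef]
  have hL : ∀ x ∈ Ioi (0 : ℝ), DifferentiableAt ℝ L x := fun x hx =>
    differentiableAt_laplaceSolution K hβ ha hx
  have hode := fun x (hx : 0 < x) => laplaceSolution_ode (p := p) K hα₀ hβ ha hx
  have hlim : Tendsto L atTop (𝓝 0) :=
    tendsto_laplaceSolution_atTop K hα₀ hβ (by linarith) hpα.le (by linarith)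
  exact ⟨hL, hode, hlim, fun M hM hMode hMlim =>
    eqOn_of_linear_ode_of_tendsto_zero (fun x hx => hasDerivAt_integratingFactor hx)
      (fun x hx => (integratingFactor_pos hx).ne')
      (tendsto_integratingFactor_atTop hα₀ hβ).norm.isBoundedUnder_le hM hL hMode hode hMlim hlim⟩
end
end

section
/- Fix c > 0 and define ℓ(α,p) = (c p / Γ(p − α + 1)) (Γ(p − α) − Γ(p) Γ(1 − α)) for α ∈ (1,2) and p ∈ (1,α). Then there exist α* ∈ (1,2) and a strictly increasing function p* : (α*,2) → (1,2) satisfying lim_{α ↓ α*} p*(α) = 1, lim_{α ↑ 2} p*(α) = 2 and p*(α) < α for all α ∈ (α*,2), such that: (i) ℓ(α,p) > 0 if α ∈ (α*,2) and p ∈ (1, p*(α)); (ii) ℓ(α,p) < 0 if either α ∈ (1,α*) and p ∈ (1,α), or α ∈ [α*,2) and p ∈ (p*(α), α) (where p*(α*) is interpreted as 1); and (iii) ℓ(α, p*(α)) = 0 for all α ∈ (α*,2). -/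
open Set Filter Topology

noncomputable section

/-- The function `ℓ(α,p) = (c p / Γ(p − α + 1)) (Γ(p − α) − Γ(p) Γ(1 − α))`. -/
def ell (c α p : ℝ) : ℝ :=
  c * p / Real.Gamma (p - α + 1) * (Real.Gamma (p - α) - Real.Gamma p * Real.Gamma (1 - α))

/-!
By the functional equation of `Γ`, `ell c α p = c p / (α − p) · (exp (−L) − 1)` where
`L = logGap α p = log Γ(p−α+1) − log Γ(p) − log Γ(2−α) + log(α−1) − log(α−p)`, so `ℓ` has the sign
of `−L`. For fixed `α`, `L` vanishes at `p = 1`, tends to `+∞` as `p ↑ α`, and is strictly convex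
in `p`: `p ↦ log Γ(p−σ) − log Γ(p)` is, by Euler's limit formula, a limit of sums of the convex
functions `log(p+m) − log(p+m−σ)`. Hence on `(1,α)` either `L > 0` throughout, or `L` has a single
zero `p*(α)` (`pstar`), being negative before and positive after it.

Convexity of `log Γ` makes `L` strictly decreasing in `α`; it is positive on `(1,α)` for
`α ≤ 5/4` and tends to `−∞` as `α ↑ 2`. So `α*` (`alphaStar`), the supremum of the `α` with
`L > 0` on `(1,α)`, lies in `(1,2)`; monotonicity in `α` makes `p*` increase, and continuity of `L`
gives the limits of `p*`.
-/

open Real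

section Convexity

variable {𝕜 : Type*} [Field 𝕜] [LinearOrder 𝕜] [IsStrictOrderedRing 𝕜] {s : Set 𝕜} {f : 𝕜 → 𝕜}
  {a x z : 𝕜}

theorem StrictConvexOn.neg_of_lt_of_nonpos (hf : StrictConvexOn 𝕜 s f) (ha : a ∈ s) (hz : z ∈ s)
    (hfa : f a = 0) (hax : a < x) (hxz : x < z) (hfz : f z ≤ 0) : f x < 0 := by
  have := hf.secant_strict_mono_aux1 ha hz hax hxz
  rw [hfa, mul_zero, zero_add] at this
  nlinarith

theorem StrictConvexOn.pos_of_lt_of_nonneg (hf : StrictConvexOn 𝕜 s f) (ha : a ∈ s) (hz : z ∈ s)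
    (hfa : f a = 0) (hax : a < x) (hxz : x < z) (hfx : 0 ≤ f x) : 0 < f z := by
  have := hf.secant_strict_mono_aux1 ha hz hax hxz
  rw [hfa, mul_zero, zero_add] at this
  nlinarith

theorem StrictConvexOn.neg_iff_of_eq_zero (hf : StrictConvexOn 𝕜 s f) (ha : a ∈ s) (hz : z ∈ s)
    (hx : x ∈ s) (hfa : f a = 0) (hfz : f z = 0) (haz : a < z) (hax : a < x) :
    f x < 0 ↔ x < z := by
  refine ⟨fun h => ?_, fun h => hf.neg_of_lt_of_nonpos ha hz hfa hax h hfz.le⟩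
  by_contra! hzx
  rcases hzx.eq_or_lt with rfl | hzx
  · exact h.ne hfz
  · exact h.not_gt (hf.pos_of_lt_of_nonneg ha hx hfa haz hzx hfz.ge)

theorem StrictConvexOn.pos_iff_of_eq_zero (hf : StrictConvexOn 𝕜 s f) (ha : a ∈ s) (hz : z ∈ s)
    (hx : x ∈ s) (hfa : f a = 0) (hfz : f z = 0) (haz : a < z) (hax : a < x) :
    0 < f x ↔ z < x := by
  refine ⟨fun h => ?_, fun h => hf.pos_of_lt_of_nonneg ha hx hfa haz h hfz.ge⟩
  by_contra! hxz
  rcases hxz.eq_or_lt with rfl | hxz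
  · exact h.ne' hfz
  · exact h.not_gt (hf.neg_of_lt_of_nonpos ha hz hfa hax hxz hfz.le)

end Convexity

theorem ConvexOn.of_tendsto {ι E : Type*} [AddCommMonoid E] [Module ℝ E] {l : Filter ι} [l.NeBot]
    {s : Set E} {F : ι → E → ℝ} {f : E → ℝ} (hF : ∀ i, ConvexOn ℝ s (F i))
    (hlim : ∀ x ∈ s, Tendsto (fun i => F i x) l (𝓝 (f x))) : ConvexOn ℝ s f := by
  obtain ⟨i⟩ := l.nonempty_of_neBot
  refine ⟨(hF i).1, fun x hx y hy a b ha hb hab => ?_⟩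
  exact le_of_tendsto_of_tendsto' (hlim _ ((hF i).1 hx hy ha hb hab))
    (((hlim x hx).const_smul a).add ((hlim y hy).const_smul b)) fun i => (hF i).2 hx hy ha hb hab

theorem ConvexOn.map_add_sub_map_le {f : ℝ → ℝ} {s : Set ℝ} (hf : ConvexOn ℝ s f) {x y h : ℝ}
    (hx : x ∈ s) (hy : y + h ∈ s) (hxy : x ≤ y) (hh : 0 < h) :
    f (x + h) - f x ≤ f (y + h) - f y := by
  have hd : 0 < y + h - x := by linarith
  set t := (y - x) / (y + h - x)
  have ht₀ : 0 ≤ t := div_nonneg (by linarith) hd.le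
  have ht₁ : t ≤ 1 := (div_le_one hd).2 (by linarith)
  -- `x + h` and `y` are the convex combinations of `x` and `y + h` with swapped weights
  have h₁ := hf.2 hx hy (sub_nonneg.2 ht₁) ht₀ (sub_add_cancel 1 t)
  have h₂ := hf.2 hx hy ht₀ (sub_nonneg.2 ht₁) (add_sub_cancel t 1)
  have e₁ : (1 - t) • x + t • (y + h) = y := by simp only [t, smul_eq_mul]; field_simp; ring
  have e₂ : t • x + (1 - t) • (y + h) = x + h := by simp only [t, smul_eq_mul]; field_simp; ring
  rw [e₁] at h₁
  rw [e₂] at h₂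
  simp only [smul_eq_mul] at h₁ h₂
  linarith

theorem convexOn_log_sub_log_sub {σ : ℝ} (hσ : 0 ≤ σ) :
    ConvexOn ℝ (Ioi σ) (fun y => log y - log (y - σ)) := by
  have hpos : ∀ y ∈ Ioi σ, 0 < y ∧ 0 < y - σ := fun y hy => ⟨by grind, sub_pos.2 hy⟩
  refine convexOn_of_hasDerivWithinAt2_nonneg (convex_Ioi σ)
    (f' := fun y => y⁻¹ - (y - σ)⁻¹) (f'' := fun y => -(y ^ 2)⁻¹ + ((y - σ) ^ 2)⁻¹) ?_ ?_ ?_ ?_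
  · intro y hy
    have := hpos y hy
    exact ((continuousAt_id.log this.1.ne').sub
      ((continuousAt_id.sub continuousAt_const).log this.2.ne')).continuousWithinAt
  all_goals rw [interior_Ioi]; intro y hy; obtain ⟨hy₀, hyσ⟩ := hpos y hy
  · exact ((hasDerivAt_log hy₀.ne').sub
      ((hasDerivAt_log hyσ.ne').comp_sub_const y σ)).hasDerivWithinAt
  · have := (hasDerivAt_inv hy₀.ne').fun_sub ((hasDerivAt_inv hyσ.ne').comp_sub_const y σ)
    rw [sub_neg_eq_add] at this
    exact this.hasDerivWithinAt
  · have := inv_anti₀ (by positivity) (by nlinarith : (y - σ) ^ 2 ≤ y ^ 2)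
    linarith

def logGamma (x : ℝ) : ℝ := log (Gamma x)

theorem logGamma_one : logGamma 1 = 0 := by simp [logGamma]

theorem logGamma_add_one {x : ℝ} (hx : 0 < x) : logGamma (x + 1) = logGamma x + log x := by
  rw [logGamma, logGamma, Gamma_add_one hx.ne', log_mul hx.ne' (Gamma_pos_of_pos hx).ne',
    add_comm]

theorem convexOn_logGamma : ConvexOn ℝ (Ioi 0) logGamma := convexOn_log_Gamma

theorem continuousAt_logGamma {x : ℝ} (hx : 0 < x) : ContinuousAt logGamma x :=
  (differentiableAt_Gamma fun m => by linarith [(m.cast_nonneg : (0:ℝ) ≤ m)]).continuousAt.log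
    (Gamma_pos_of_pos hx).ne'

@[fun_prop]
theorem ContinuousAt.logGamma {α : Type*} [TopologicalSpace α] {f : α → ℝ} {a : α}
    (hf : ContinuousAt f a) (ha : 0 < f a) : ContinuousAt (fun x => logGamma (f x)) a :=
  (continuousAt_logGamma ha).comp hf

theorem logGamma_nonpos {x : ℝ} (hx₁ : 1 ≤ x) (hx₂ : x ≤ 2) : logGamma x ≤ 0 := by
  have := convexOn_Gamma.le_on_segment (x := 1) (y := 2) (by norm_num) (by norm_num)
    (by rw [segment_eq_Icc (by norm_num)]; exact ⟨hx₁, hx₂⟩)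
  rw [Gamma_one, Gamma_two, max_self] at this
  exact log_nonpos (Gamma_pos_of_pos (by linarith)).le this

theorem logGamma_nonneg {x : ℝ} (hx₀ : 0 < x) (hx₁ : x ≤ 1) : 0 ≤ logGamma x := by
  have := Gamma_strictAntiOn_Ioc.antitoneOn ⟨hx₀, hx₁⟩ ⟨one_pos, le_rfl⟩ hx₁
  rw [Gamma_one] at this
  exact log_nonneg this

theorem tendsto_logGamma_nhdsGT_zero : Tendsto logGamma (𝓝[>] 0) atTop := by
  have hshift : Tendsto (fun x => logGamma (x + 1)) (𝓝[>] 0) (𝓝 (logGamma (0 + 1))) :=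
    ((continuousAt_logGamma (by norm_num)).tendsto.comp
      (tendsto_id.add_const 1)).mono_left nhdsWithin_le_nhds
  refine (hshift.add_atTop (tendsto_neg_atBot_atTop.comp tendsto_log_nhdsGT_zero)).congr' ?_
  filter_upwards [self_mem_nhdsWithin] with x hx
  simp [logGamma_add_one (mem_Ioi.1 hx)]

theorem convexOn_logGamma_sub_sub_logGamma {σ : ℝ} (hσ : 0 ≤ σ) :
    ConvexOn ℝ (Ioi σ) (fun p => logGamma (p - σ) - logGamma p) := by
  open BohrMollerup in
  have hterm (m : ℕ) : ConvexOn ℝ (Ioi σ) (fun p => log (p + m) - log (p + m - σ)) :=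
    ((convexOn_log_sub_log_sub hσ).translate_left (m : ℝ)).subset
      (fun p hp => by simp only [mem_preimage, mem_Ioi] at hp ⊢; linarith [m.cast_nonneg (α := ℝ)])
      (convex_Ioi σ)
  have hsum (n : ℕ) : ConvexOn ℝ (Ioi σ)
      (fun p => ∑ m ∈ Finset.range (n + 1), (log (p + m) - log (p + m - σ))) := by
    have := Finset.sum_induction _ (ConvexOn ℝ (Ioi σ)) (fun _ _ => ConvexOn.add)
      (convexOn_const 0 (convex_Ioi σ)) (fun m _ => hterm m) (s := Finset.range (n + 1))
    simpa only [Finset.sum_fn] using this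
  refine ConvexOn.of_tendsto (l := atTop)
    (F := fun n p => logGammaSeq (p - σ) n - logGammaSeq p n) (fun n => ?_) fun p hp => ?_
  · refine ((convexOn_const (-σ * log n) (convex_Ioi σ)).add (hsum n)).congr fun p _ => ?_
    simp only [Pi.add_apply, logGammaSeq, Finset.sum_sub_distrib, sub_add_eq_add_sub]
    ring
  · exact (tendsto_log_gamma (sub_pos.2 hp)).sub (tendsto_log_gamma (hσ.trans_lt hp))

def logGap (α p : ℝ) : ℝ :=
  logGamma (p - α + 1) - logGamma p - logGamma (2 - α) + log (α - 1) - log (α - p)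

theorem logGap_one (α : ℝ) : logGap α 1 = 0 := by
  simp [logGap, logGamma_one, show (1:ℝ) - α + 1 = 2 - α by ring]

theorem exp_neg_logGap {α p : ℝ} (hα : α ∈ Ioo 1 2) (hp : p ∈ Ioo (α - 1) α) :
    exp (-logGap α p) = Gamma p * Gamma (2 - α) * (α - p) / (Gamma (p - α + 1) * (α - 1)) := by
  obtain ⟨h1, h2⟩ := hα
  obtain ⟨h3, h4⟩ := hp
  have hα₁ : 0 < α - 1 := by linarith
  have hαp : 0 < α - p := by linarith
  have hΓ₁ := Gamma_pos_of_pos (by linarith : 0 < p)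
  have hΓ₂ := Gamma_pos_of_pos (by linarith : 0 < 2 - α)
  have hΓ₃ := Gamma_pos_of_pos (by linarith : 0 < p - α + 1)
  rw [← exp_log (by positivity :
      0 < Gamma p * Gamma (2 - α) * (α - p) / (Gamma (p - α + 1) * (α - 1))),
    log_div (by positivity) (by positivity), log_mul (by positivity) hαp.ne',
    log_mul hΓ₁.ne' hΓ₂.ne', log_mul hΓ₃.ne' hα₁.ne']
  congr 1
  simp only [logGap, logGamma]
  ring

theorem ell_eq {c α p : ℝ} (hα : α ∈ Ioo 1 2) (hp : p ∈ Ioo (α - 1) α) :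
    ell c α p = c * p / (α - p) * (exp (-logGap α p) - 1) := by
  obtain ⟨h1, h2⟩ := hα
  obtain ⟨h3, h4⟩ := hp
  have hΓ₃ := Gamma_pos_of_pos (by linarith : 0 < p - α + 1)
  have e₁ : Gamma (p - α + 1) = (p - α) * Gamma (p - α) := Gamma_add_one (by linarith)
  have e₂ : Gamma (1 - α + 1) = (1 - α) * Gamma (1 - α) := Gamma_add_one (by linarith)
  rw [exp_neg_logGap ⟨h1, h2⟩ ⟨h3, h4⟩, ell, show (2:ℝ) - α = 1 - α + 1 by ring, e₂]
  rw [e₁] at hΓ₃ ⊢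
  have : α - p ≠ 0 := by linarith
  have : α - 1 ≠ 0 := by linarith
  have : p - α ≠ 0 := by linarith
  have : Gamma (p - α) ≠ 0 := right_ne_zero_of_mul hΓ₃.ne'
  field_simp
  ring

theorem ell_pos_iff {c α p : ℝ} (hc : 0 < c) (hα : α ∈ Ioo 1 2) (hp : p ∈ Ioo 1 α) :
    0 < ell c α p ↔ logGap α p < 0 := by
  have hk : 0 < c * p / (α - p) := div_pos (mul_pos hc (by linarith [hp.1])) (sub_pos.2 hp.2)
  rw [ell_eq hα ⟨by linarith [hp.1, hα.2], hp.2⟩, mul_pos_iff_of_pos_left hk, sub_pos,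
    one_lt_exp_iff, neg_pos]

theorem ell_neg_iff {c α p : ℝ} (hc : 0 < c) (hα : α ∈ Ioo 1 2) (hp : p ∈ Ioo 1 α) :
    ell c α p < 0 ↔ 0 < logGap α p := by
  have hk : 0 < c * p / (α - p) := div_pos (mul_pos hc (by linarith [hp.1])) (sub_pos.2 hp.2)
  rw [ell_eq hα ⟨by linarith [hp.1, hα.2], hp.2⟩, ← smul_eq_mul, smul_neg_iff_of_pos_left hk,
    sub_neg, exp_lt_one_iff, neg_lt_zero]

theorem ell_eq_zero_iff {c α p : ℝ} (hc : 0 < c) (hα : α ∈ Ioo 1 2) (hp : p ∈ Ioo 1 α) :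
    ell c α p = 0 ↔ logGap α p = 0 := by
  have hk : 0 < c * p / (α - p) := div_pos (mul_pos hc (by linarith [hp.1])) (sub_pos.2 hp.2)
  rw [ell_eq hα ⟨by linarith [hp.1, hα.2], hp.2⟩, mul_eq_zero_iff_left hk.ne', sub_eq_zero,
    exp_eq_one_iff, neg_eq_zero]

theorem strictConvexOn_neg_log_sub (a : ℝ) : StrictConvexOn ℝ (Iio a) (fun p => -log (a - p)) := by
  refine ⟨convex_Iio a, fun x hx y hy hxy s t hs ht hst => ?_⟩
  have := strictConcaveOn_log_Ioi.2 (mem_Ioi.2 (sub_pos.2 hx)) (mem_Ioi.2 (sub_pos.2 hy))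
    (fun h : a - x = a - y => hxy (by linarith)) hs ht hst
  have e : s • (a - x) + t • (a - y) = a - (s • x + t • y) := by
    simp only [smul_eq_mul]; linear_combination a * hst
  simp only [smul_eq_mul] at this e ⊢
  rw [e] at this
  linarith

theorem strictConvexOn_logGap {α : ℝ} (hα : 1 ≤ α) :
    StrictConvexOn ℝ (Ioo (α - 1) α) (logGap α) := by
  have h₁ := (convexOn_logGamma_sub_sub_logGamma (sub_nonneg.2 hα)).subset (s := Ioo (α - 1) α)
    (fun _ hp => mem_Ioi.2 hp.1) (convex_Ioo _ _)
  have h₂ := (strictConvexOn_neg_log_sub α).subset (s := Ioo (α - 1) α)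
    (fun _ hp => mem_Iio.2 hp.2) (convex_Ioo _ _)
  refine ((h₁.add_strictConvexOn h₂).add_const (log (α - 1) - logGamma (2 - α))).congr
    fun p _ => ?_
  simp only [logGap, Pi.add_apply, sub_sub_eq_add_sub, sub_add_eq_add_sub _ α]
  ring

theorem strictAntiOn_logGap_left {p : ℝ} (hp : 1 < p) :
    StrictAntiOn (fun α => logGap α p) (Ioo p 2) := by
  rintro α₁ ⟨hpα₁, hα₁⟩ α₂ ⟨hpα₂, hα₂⟩ h₁₂
  have hΓ := convexOn_logGamma.map_add_sub_map_le (x := 2 - α₂) (y := 2 - α₁) (h := p - 1)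
    (sub_pos.2 hα₂) (by simp only [mem_Ioi]; linarith) (by linarith) (by linarith)
  have hlog : log (α₂ - 1) - log (α₂ - p) < log (α₁ - 1) - log (α₁ - p) := by
    rw [← log_div (by linarith) (by linarith), ← log_div (by linarith) (by linarith)]
    exact log_lt_log (div_pos (by linarith) (by linarith))
      ((div_lt_div_iff₀ (by linarith) (by linarith)).2 (by nlinarith))
  have e (α : ℝ) : p - α + 1 = 2 - α + (p - 1) := by ring
  simp only [logGap, e]
  linarith

theorem tendsto_sub_nhdsLT_nhdsGT_zero (a : ℝ) : Tendsto (fun x => a - x) (𝓝[<] a) (𝓝[>] 0) := by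
  have : Tendsto (fun x => a - x) (𝓝 a) (𝓝 0) := by
    simpa using (continuous_sub_left a).tendsto a
  exact tendsto_nhdsWithin_iff.2 ⟨this.mono_left nhdsWithin_le_nhds,
    eventually_nhdsWithin_of_forall fun _ hx => mem_Ioi.2 (sub_pos.2 hx)⟩

theorem tendsto_logGap_nhdsLT_atTop {α : ℝ} (hα : α ∈ Ioo 1 2) :
    Tendsto (logGap α) (𝓝[<] α) atTop := by
  have hcont : ContinuousAt
      (fun p => logGamma (p - α + 1) - logGamma p - logGamma (2 - α) + log (α - 1)) α := by
    have := hα.1; have := hα.2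
    fun_prop (disch := grind)
  exact (hcont.tendsto.mono_left nhdsWithin_le_nhds).add_atTop
    (tendsto_neg_atBot_atTop.comp (tendsto_log_nhdsGT_zero.comp (tendsto_sub_nhdsLT_nhdsGT_zero α)))

theorem tendsto_logGap_nhdsLT_two_atBot {p : ℝ} (hp : p ∈ Ioo 1 2) :
    Tendsto (fun α => logGap α p) (𝓝[<] 2) atBot := by
  have hcont : ContinuousAt
      (fun α => logGamma (p - α + 1) - logGamma p + log (α - 1) - log (α - p)) 2 := by
    have := hp.1; have := hp.2
    fun_prop (disch := grind)
  refine ((hcont.tendsto.mono_left nhdsWithin_le_nhds).add_atBot (tendsto_neg_atTop_atBot.comp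
    (tendsto_logGamma_nhdsGT_zero.comp (tendsto_sub_nhdsLT_nhdsGT_zero 2)))).congr fun α => ?_
  simp only [logGap, Function.comp_apply]
  ring

theorem logGamma_one_half_le : logGamma (1 / 2) ≤ log 2 := by
  rw [logGamma, Gamma_one_half_eq]
  exact log_le_log (sqrt_pos.2 pi_pos) (sqrt_le_iff.2 ⟨by norm_num, by linarith [pi_lt_four]⟩)

theorem logGap_pos_of_le_five_div_four {α p : ℝ} (hα : α ≤ 5 / 4) (hp : p ∈ Ioo 1 α) :
    0 < logGap α p := by
  obtain ⟨hp₁, hpα⟩ := hp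
  have hlog2 : log 2 < 1 := by
    linarith [log_lt_sub_one_of_pos (by norm_num : (0:ℝ) < 2) (by norm_num)]
  have hlog2' : 0 < log 2 := log_pos one_lt_two
  have hΓ : -4 * log 2 * (p - 1) ≤ logGamma (p - α + 1) - logGamma (2 - α) := by
    have hslope := convexOn_logGamma.slope_mono_adjacent (x := 1 / 2) (y := 2 - α)
      (z := p - α + 1) (by norm_num) (by simp only [mem_Ioi]; linarith) (by linarith) (by linarith)
    rw [show p - α + 1 - (2 - α) = p - 1 by ring, le_div_iff₀ (by linarith)] at hslope
    have h₀ := logGamma_nonneg (x := 2 - α) (by linarith) (by linarith)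
    have : -4 * log 2 ≤ (logGamma (2 - α) - logGamma (1 / 2)) / (2 - α - 1 / 2) := by
      rw [le_div_iff₀ (by linarith)]
      nlinarith [logGamma_one_half_le]
    nlinarith
  have hlog : 4 * (p - 1) ≤ log (α - 1) - log (α - p) := by
    rw [← log_div (by linarith) (by linarith)]
    have := one_sub_inv_le_log_of_pos (div_pos (by linarith : 0 < α - 1) (by linarith : 0 < α - p))
    have : 4 * (p - 1) ≤ 1 - ((α - 1) / (α - p))⁻¹ := by
      rw [inv_div, one_sub_div (by linarith), le_div_iff₀ (by linarith)]
      nlinarith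
    linarith
  have := logGamma_nonpos hp₁.le (by linarith)
  simp only [logGap]
  nlinarith

theorem continuousAt_logGap_left {α p : ℝ} (hα : α ∈ Ioo 1 2) (hp : p ∈ Ioo (α - 1) α) :
    ContinuousAt (fun β => logGap β p) α := by
  unfold logGap
  fun_prop (disch := grind)

theorem continuousAt_logGap_right {α p : ℝ} (hα : α ∈ Ioo 1 2) (hp : p ∈ Ioo (α - 1) α) :
    ContinuousAt (logGap α) p := by
  unfold logGap
  fun_prop (disch := grind)

def noBreakdownSet : Set ℝ := {α | α ∈ Ioo 1 2 ∧ ∀ p ∈ Ioo 1 α, 0 < logGap α p}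

def alphaStar : ℝ := sSup noBreakdownSet

theorem five_div_four_mem_noBreakdownSet : (5 / 4 : ℝ) ∈ noBreakdownSet :=
  ⟨by norm_num, fun _ hp => logGap_pos_of_le_five_div_four le_rfl hp⟩

theorem exists_lt_two_mem_upperBounds_noBreakdownSet :
    ∃ β < 2, β ∈ upperBounds noBreakdownSet := by
  obtain ⟨β, hβ, hneg⟩ := mem_nhdsLT_iff_exists_Ioo_subset.1
    ((tendsto_logGap_nhdsLT_two_atBot (p := 3 / 2) (by norm_num)).eventually
      (eventually_lt_atBot 0))
  refine ⟨max β (3 / 2), max_lt hβ (by norm_num), fun α hα => ?_⟩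
  by_contra! h
  exact (hα.2 (3 / 2) ⟨by norm_num, (le_max_right _ _).trans_lt h⟩).not_gt
    (hneg ⟨(le_max_left _ _).trans_lt h, hα.1.2⟩)

theorem bddAbove_noBreakdownSet : BddAbove noBreakdownSet :=
  let ⟨β, _, hβ⟩ := exists_lt_two_mem_upperBounds_noBreakdownSet
  ⟨β, hβ⟩

theorem one_lt_alphaStar : 1 < alphaStar :=
  lt_of_lt_of_le (by norm_num) (le_csSup bddAbove_noBreakdownSet five_div_four_mem_noBreakdownSet)

theorem alphaStar_lt_two : alphaStar < 2 :=
  let ⟨_, hβ₂, hβ⟩ := exists_lt_two_mem_upperBounds_noBreakdownSet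
  (csSup_le ⟨_, five_div_four_mem_noBreakdownSet⟩ hβ).trans_lt hβ₂

theorem alphaStar_mem : alphaStar ∈ Ioo 1 2 := ⟨one_lt_alphaStar, alphaStar_lt_two⟩

theorem Ioo_alphaStar_two_subset : Ioo alphaStar 2 ⊆ Ioo 1 2 :=
  Ioo_subset_Ioo_left one_lt_alphaStar.le

theorem logGap_pos_of_lt_alphaStar {α p : ℝ} (hα : α < alphaStar) (hp : p ∈ Ioo 1 α) :
    0 < logGap α p := by
  obtain ⟨β, hβ, hαβ⟩ := exists_lt_of_lt_csSup ⟨_, five_div_four_mem_noBreakdownSet⟩ hα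
  exact (hβ.2 p ⟨hp.1, hp.2.trans hαβ⟩).trans
    (strictAntiOn_logGap_left hp.1 ⟨hp.2, hαβ.trans hβ.1.2⟩ ⟨hp.2.trans hαβ, hβ.1.2⟩ hαβ)

theorem logGap_alphaStar_pos {p : ℝ} (hp : p ∈ Ioo 1 alphaStar) : 0 < logGap alphaStar p := by
  have hα := alphaStar_mem
  -- positivity for `α < α*` passes to the limit `α = α*` as nonnegativity ...
  have hnonneg : ∀ q ∈ Ioo 1 alphaStar, 0 ≤ logGap alphaStar q := fun q hq =>
    ge_of_tendsto ((continuousAt_logGap_left hα ⟨by linarith [hq.1, hα.2], hq.2⟩).mono_left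
      nhdsWithin_le_nhds) (by
        filter_upwards [Ioo_mem_nhdsLT hq.2] with β hβ
        exact (logGap_pos_of_lt_alphaStar hβ.2 ⟨hq.1, hβ.1⟩).le)
  -- ... and strict convexity together with `logGap α* 1 = 0` excludes a zero
  by_contra! h
  have hmid : (1 + p) / 2 ∈ Ioo 1 alphaStar := ⟨by linarith [hp.1], by linarith [hp.1, hp.2]⟩
  refine (hnonneg _ hmid).not_gt ((strictConvexOn_logGap one_lt_alphaStar.le).neg_of_lt_of_nonpos
    ⟨by linarith [hα.2], hα.1⟩ ⟨by linarith [hp.1, hα.2], hp.2⟩ (logGap_one _) hmid.1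
    (by linarith [hp.1]) h)

theorem exists_logGap_eq_zero {α : ℝ} (hα : α ∈ Ioo alphaStar 2) :
    ∃ q ∈ Ioo 1 α, logGap α q = 0 := by
  have hα' := Ioo_alphaStar_two_subset hα
  obtain ⟨p, hp, hp₀⟩ : ∃ p ∈ Ioo 1 α, logGap α p ≤ 0 := by
    by_contra! h
    exact hα.1.not_ge (le_csSup bddAbove_noBreakdownSet ⟨hα', h⟩)
  obtain ⟨p₂, hp₂, hpp₂⟩ := (((tendsto_logGap_nhdsLT_atTop hα').eventually
    (eventually_gt_atTop 0)).and (Ioo_mem_nhdsLT hp.2)).exists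
  have hcont : ContinuousOn (logGap α) (Icc p p₂) := fun q hq =>
    (continuousAt_logGap_right hα' ⟨by linarith [hp.1, hq.1, hα'.2], by linarith [hq.2, hpp₂.2]⟩
      ).continuousWithinAt
  obtain ⟨q, hq, hq₀⟩ := intermediate_value_Icc hpp₂.1.le hcont ⟨hp₀, hp₂.le⟩
  exact ⟨q, ⟨hp.1.trans_le hq.1, hq.2.trans_lt hpp₂.2⟩, hq₀⟩

def pstar (α : ℝ) : ℝ :=
  if hα : α ∈ Ioo alphaStar 2 then (exists_logGap_eq_zero hα).choose else 1

theorem pstar_mem {α : ℝ} (hα : α ∈ Ioo alphaStar 2) : pstar α ∈ Ioo 1 α := by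
  rw [pstar, dif_pos hα]
  exact (exists_logGap_eq_zero hα).choose_spec.1

theorem logGap_pstar {α : ℝ} (hα : α ∈ Ioo alphaStar 2) : logGap α (pstar α) = 0 := by
  rw [pstar, dif_pos hα]
  exact (exists_logGap_eq_zero hα).choose_spec.2

theorem logGap_neg_iff {α p : ℝ} (hα : α ∈ Ioo alphaStar 2) (hp : p ∈ Ioo 1 α) :
    logGap α p < 0 ↔ p < pstar α := by
  obtain ⟨h₁, h₂⟩ := Ioo_alphaStar_two_subset hα
  obtain ⟨hq₁, hq₂⟩ := pstar_mem hα
  exact (strictConvexOn_logGap h₁.le).neg_iff_of_eq_zero ⟨by linarith, h₁⟩ ⟨by linarith, hq₂⟩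
    ⟨by linarith [hp.1], hp.2⟩ (logGap_one α) (logGap_pstar hα) hq₁ hp.1

theorem logGap_pos_iff {α p : ℝ} (hα : α ∈ Ioo alphaStar 2) (hp : p ∈ Ioo 1 α) :
    0 < logGap α p ↔ pstar α < p := by
  obtain ⟨h₁, h₂⟩ := Ioo_alphaStar_two_subset hα
  obtain ⟨hq₁, hq₂⟩ := pstar_mem hα
  exact (strictConvexOn_logGap h₁.le).pos_iff_of_eq_zero ⟨by linarith, h₁⟩ ⟨by linarith, hq₂⟩
    ⟨by linarith [hp.1], hp.2⟩ (logGap_one α) (logGap_pstar hα) hq₁ hp.1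

theorem strictMonoOn_pstar : StrictMonoOn pstar (Ioo alphaStar 2) := by
  intro α₁ h₁ α₂ h₂ h₁₂
  obtain ⟨hq₁, hq₂⟩ := pstar_mem h₁
  refine (logGap_neg_iff h₂ ⟨hq₁, hq₂.trans h₁₂⟩).1 ?_
  rw [← logGap_pstar h₁]
  exact strictAntiOn_logGap_left hq₁ ⟨hq₂, h₁.2⟩ ⟨hq₂.trans h₁₂, h₂.2⟩ h₁₂

theorem tendsto_pstar_nhdsGT_alphaStar : Tendsto pstar (𝓝[>] alphaStar) (𝓝 1) := by
  refine tendsto_order.2 ⟨fun b hb => ?_, fun b hb => ?_⟩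
  · filter_upwards [Ioo_mem_nhdsGT alphaStar_lt_two] with α hα
    exact hb.trans (pstar_mem hα).1
  · obtain ⟨p, hp₁, hp⟩ := exists_between (lt_min hb one_lt_alphaStar)
    have hpos := logGap_alphaStar_pos ⟨hp₁, hp.trans_le (min_le_right _ _)⟩
    filter_upwards [Ioo_mem_nhdsGT alphaStar_lt_two, ((continuousAt_logGap_left alphaStar_mem
      ⟨by linarith [alphaStar_lt_two], hp.trans_le (min_le_right _ _)⟩).eventually_const_lt
        hpos).filter_mono
      nhdsWithin_le_nhds] with α hα hαp
    exact ((logGap_pos_iff hα ⟨hp₁, by linarith [hα.1, min_le_right b alphaStar]⟩).1 hαp).trans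
      (hp.trans_le (min_le_left _ _))

theorem tendsto_pstar_nhdsLT_two : Tendsto pstar (𝓝[<] 2) (𝓝 2) := by
  refine tendsto_order.2 ⟨fun b hb => ?_, fun b hb => ?_⟩
  · obtain ⟨p, hp, hp₂⟩ := exists_between (max_lt hb (one_lt_two : (1:ℝ) < 2))
    filter_upwards [Ioo_mem_nhdsLT (max_lt alphaStar_lt_two hp₂),
      (tendsto_logGap_nhdsLT_two_atBot ⟨(le_max_right _ _).trans_lt hp, hp₂⟩).eventually
        (eventually_lt_atBot 0)] with α hα hneg
    have hα' : α ∈ Ioo alphaStar 2 := ⟨(le_max_left _ _).trans_lt hα.1, hα.2⟩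
    exact (le_max_left _ _).trans_lt (hp.trans ((logGap_neg_iff hα'
      ⟨(le_max_right _ _).trans_lt hp, (le_max_right _ _).trans_lt hα.1⟩).1 hneg))
  · filter_upwards [Ioo_mem_nhdsLT alphaStar_lt_two] with α hα
    exact (pstar_mem hα).2.trans (hα.2.trans hb)

theorem breakdown_points_exist {c : ℝ} (hc : 0 < c) :
    ∃ αs ∈ Set.Ioo (1:ℝ) 2, ∃ ps : ℝ → ℝ,
      StrictMonoOn ps (Set.Ioo αs 2) ∧
      (∀ α ∈ Set.Ioo αs 2, ps α ∈ Set.Ioo (1:ℝ) 2) ∧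
      Tendsto ps (𝓝[>] αs) (𝓝 1) ∧
      Tendsto ps (𝓝[<] (2:ℝ)) (𝓝 2) ∧
      (∀ α ∈ Set.Ioo αs 2, ps α < α) ∧
      -- (i) positivity
      (∀ α ∈ Set.Ioo αs 2, ∀ p ∈ Set.Ioo 1 (ps α), 0 < ell c α p) ∧
      -- (ii) negativity
      (∀ α ∈ Set.Ioo (1:ℝ) αs, ∀ p ∈ Set.Ioo 1 α, ell c α p < 0) ∧
      (∀ p ∈ Set.Ioo 1 αs, ell c αs p < 0) ∧
      (∀ α ∈ Set.Ioo αs 2, ∀ p ∈ Set.Ioo (ps α) α, ell c α p < 0) ∧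
      -- (iii) the zero curve
      (∀ α ∈ Set.Ioo αs 2, ell c α (ps α) = 0) := by
  refine ⟨alphaStar, alphaStar_mem, pstar, strictMonoOn_pstar,
    fun α hα => ⟨(pstar_mem hα).1, (pstar_mem hα).2.trans hα.2⟩, tendsto_pstar_nhdsGT_alphaStar,
    tendsto_pstar_nhdsLT_two, fun α hα => (pstar_mem hα).2, ?_, ?_, ?_, ?_, ?_⟩
  · intro α hα p hp
    have hp' : p ∈ Ioo 1 α := ⟨hp.1, hp.2.trans (pstar_mem hα).2⟩
    exact (ell_pos_iff hc (Ioo_alphaStar_two_subset hα) hp').2 ((logGap_neg_iff hα hp').2 hp.2)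
  · intro α hα p hp
    exact (ell_neg_iff hc ⟨hα.1, hα.2.trans alphaStar_lt_two⟩ hp).2
      (logGap_pos_of_lt_alphaStar hα.2 hp)
  · exact fun p hp => (ell_neg_iff hc alphaStar_mem hp).2 (logGap_alphaStar_pos hp)
  · intro α hα p hp
    have hp' : p ∈ Ioo 1 α := ⟨(pstar_mem hα).1.trans hp.1, hp.2⟩
    exact (ell_neg_iff hc (Ioo_alphaStar_two_subset hα) hp').2 ((logGap_pos_iff hα hp').2 hp.1)
  · exact fun α hα =>
      (ell_eq_zero_iff hc (Ioo_alphaStar_two_subset hα) (pstar_mem hα)).2 (logGap_pstar hα)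
end
end

section
/- Let p > 1 and let S be a nonnegative random variable on a probability space with E[S^p] < ∞. Define G(z) = E[(z ∨ S)^p] for z ≥ 0. If z₀ > 0 satisfies P(S = z₀) = 0, then G is differentiable at z₀ with G'(z₀) = p z₀^{p−1} P(S ≤ z₀). -/
open Set Filter MeasureTheory Topology

noncomputable section

/-! Differentiate under the integral sign. For each `ω` the map `z ↦ (z ∨ S ω) ^ p` is
differentiable at `z₀` unless `S ω = z₀`, a null event, with derivative `p z₀ ^ (p - 1)` on
`{S < z₀}` and `0` on `{S > z₀}`. On `[0, 2 z₀]` it is Lipschitz with the constant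
`p (2 z₀) ^ (p - 1)`, independent of `ω`, which provides the domination. -/

theorem Real.lipschitzOnWith_rpow_Icc {p M : ℝ} (hp : 1 ≤ p) :
    LipschitzOnWith (p * M ^ (p - 1)).toNNReal (fun x : ℝ => x ^ p) (Icc 0 M) := by
  refine (convex_Icc 0 M).lipschitzOnWith_of_nnnorm_hasDerivWithin_le
    (fun x _ => (Real.hasDerivAt_rpow_const (Or.inr hp)).hasDerivWithinAt) fun x hx => ?_
  rw [← NNReal.coe_le_coe, coe_nnnorm, Real.coe_toNNReal', Real.norm_eq_abs,
    abs_of_nonneg (by have := hx.1; positivity)]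
  refine le_max_of_le_left (mul_le_mul_of_nonneg_left ?_ (by linarith))
  exact Real.rpow_le_rpow hx.1 hx.2 (by linarith)

theorem lipschitzOnWith_max_rpow_Icc {p M : ℝ} (hp : 1 ≤ p) (s : ℝ) :
    LipschitzOnWith (p * M ^ (p - 1)).toNNReal (fun z : ℝ => max z s ^ p) (Icc 0 M) := by
  rcases le_or_gt s M with hsM | hMs
  · have hmaps : MapsTo (fun z => max z s) (Icc 0 M) (Icc 0 M) := fun z hz =>
      ⟨le_max_of_le_left hz.1, max_le hz.2 hsM⟩
    have hcomp := (Real.lipschitzOnWith_rpow_Icc hp).comp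
      (LipschitzWith.id.max_const s).lipschitzOnWith hmaps
    rwa [mul_one] at hcomp
  · intro x hx y hy
    dsimp only
    rw [max_eq_right (hx.2.trans hMs.le), max_eq_right (hy.2.trans hMs.le), edist_self]
    exact zero_le

theorem norm_max_rpow_le {p z : ℝ} (hz : 0 ≤ z) (s : ℝ) :
    ‖max z s ^ p‖ ≤ z ^ p + ‖s ^ p‖ := by
  rcases le_total s z with hsz | hzs
  · rw [max_eq_left hsz, Real.norm_of_nonneg (by positivity)]
    exact le_add_of_nonneg_right (norm_nonneg _)
  · rw [max_eq_right hzs]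
    exact le_add_of_nonneg_left (by positivity)

theorem MeasureTheory.Integrable.const_max_rpow {Ω : Type*} {m : MeasurableSpace Ω}
    {μ : Measure Ω} [IsFiniteMeasure μ] {S : Ω → ℝ} {p z : ℝ} (hz : 0 ≤ z)
    (hSm : AEMeasurable S μ) (hSp : Integrable (fun ω => S ω ^ p) μ) :
    Integrable (fun ω => max z (S ω) ^ p) μ :=
  ((integrable_const (z ^ p)).add hSp.norm).mono'
    ((aemeasurable_const.max hSm).pow_const p).aestronglyMeasurable
    (ae_of_all _ fun ω => norm_max_rpow_le hz (S ω))

theorem hasDerivAt_max_rpow {p z₀ s : ℝ} (hz₀ : 0 < z₀) (hs : s ≠ z₀) :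
    HasDerivAt (fun z => max z s ^ p) ((Iic z₀).indicator (fun _ => p * z₀ ^ (p - 1)) s) z₀ := by
  rcases hs.lt_or_gt with hlt | hgt
  · rw [indicator_of_mem (show s ∈ Iic z₀ from hlt.le)]
    refine (Real.hasDerivAt_rpow_const (Or.inl hz₀.ne')).congr_of_eventuallyEq ?_
    filter_upwards [eventually_gt_nhds hlt] with z hz
    rw [max_eq_left hz.le]
  · rw [indicator_of_notMem (show s ∉ Iic z₀ from not_le.2 hgt)]
    refine (hasDerivAt_const z₀ (s ^ p)).congr_of_eventuallyEq ?_
    filter_upwards [eventually_lt_nhds hgt] with z hz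
    rw [max_eq_right hz.le]

theorem gain_function_derivative_general
    {Ω : Type*} [MeasureSpace Ω] [IsProbabilityMeasure (volume : Measure Ω)]
    {p : ℝ} (hp : 1 < p) {S : Ω → ℝ} (hSm : Measurable S)
    (hSp : Integrable (fun ω => S ω ^ p))
    {z₀ : ℝ} (hz₀ : 0 < z₀) (hatom : (volume : Measure Ω) {ω | S ω = z₀} = 0) :
    HasDerivAt (fun z => ∫ ω, (max z (S ω)) ^ p)
      (p * z₀ ^ (p - 1) * ((volume : Measure Ω) {ω | S ω ≤ z₀}).toReal) z₀ := by
  set C := p * (2 * z₀) ^ (p - 1)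
  have hC : 0 ≤ C := by positivity
  have hdiff : ∀ᵐ ω, HasDerivAt (fun z => max z (S ω) ^ p)
      ({ω | S ω ≤ z₀}.indicator (fun _ => p * z₀ ^ (p - 1)) ω) z₀ := by
    have hne : ∀ᵐ ω, S ω ≠ z₀ := measure_eq_zero_iff_ae_notMem.1 hatom
    filter_upwards [hne] with ω hω
    exact hasDerivAt_max_rpow hz₀ hω
  have hderiv := (hasDerivAt_integral_of_dominated_loc_of_lip
    (F := fun z ω => max z (S ω) ^ p) (bound := fun _ => C)
    (Icc_mem_nhds (by positivity) (by linarith : z₀ < 2 * z₀))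
    (Eventually.of_forall fun z => ((measurable_const.max hSm).pow_const p).aestronglyMeasurable)
    (hSp.const_max_rpow hz₀.le hSm.aemeasurable)
    (measurable_const.indicator (hSm measurableSet_Iic)).aestronglyMeasurable
    (ae_of_all _ fun ω => by
      simpa only [Real.nnabs_of_nonneg hC] using lipschitzOnWith_max_rpow_Icc hp.le (S ω))
    (integrable_const C) hdiff).2
  rwa [integral_indicator_const _ (hSm measurableSet_Iic), smul_eq_mul, mul_comm,
    measureReal_def] at hderiv

theorem gain_function_derivative
    {Ω : Type*} [MeasureSpace Ω] [IsProbabilityMeasure (volume : Measure Ω)]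
    {p : ℝ} (hp : 1 < p) {S : Ω → ℝ} (hSm : Measurable S) (hS0 : ∀ ω, 0 ≤ S ω)
    (hSp : Integrable (fun ω => S ω ^ p))
    {z₀ : ℝ} (hz₀ : 0 < z₀) (hatom : (volume : Measure Ω) {ω | S ω = z₀} = 0) :
    HasDerivAt (fun z => ∫ ω, (max z (S ω)) ^ p)
      (p * z₀ ^ (p - 1) * ((volume : Measure Ω) {ω | S ω ≤ z₀}).toReal) z₀ :=
  gain_function_derivative_general hp hSm hSp hz₀ hatom
end
end

section
/- Let α ∈ (1,2), p ∈ (1,α) and c > 0. Let S be a strictly positive random variable with E[S^p] < ∞ whose distribution function F_S is continuously differentiable on (0,∞) with density f_S, and suppose there exist constants C_f > 0 and C_F > 0 such that f_S(z) ~ C_f z^{α−2} and F_S(z) ~ C_F z^{α−1} as z ↓ 0. Define G(z) = z^p + ∫_{z^p}^∞ (1 − F_S(w^{1/p})) dw and H(z) = z G'(z) + (c/(α−1)) ∫₀^z G''(x) (z−x)^{1−α} dx − p G(z) for z > 0. Then lim_{z ↓ 0} H(z) = −p G(0) = −p E[S^p] < 0. -/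
/-!
By the layer-cake formula the integrand `w ↦ 1 - F_S(w^{1/p}) = P(S^p > w)` is integrable on
`(0, ∞)` with integral `E[S^p] = G 0`, so `G` is right-continuous at `0` and
`G'(z) = p z^{p-1} F_S(z)`; since `F_S ≤ 1`, `z G'(z) = O(z^p) → 0`. The asymptotics of `F_S`
and `f_S` give `G''(x) = O(x^{p+α-3})`, and the substitution `x = z u` turns the fractional
integral of this bound into a Beta integral times `z^{p-1}`, which tends to `0` since `p > 1`.
-/

open Set Filter MeasureTheory Topology Asymptotics

noncomputable section

lemma intervalIntegrable_rpow_mul_sub_rpow {β γ z : ℝ} (hβ : -1 < β) (hγ : -1 < γ)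
    (hz : 0 < z) : IntervalIntegrable (fun x => x ^ β * (z - x) ^ γ) volume 0 z := by
  have hleft : IntervalIntegrable (fun x => x ^ β * (z - x) ^ γ) volume 0 (z / 2) := by
    refine (intervalIntegral.intervalIntegrable_rpow' hβ).mul_continuousOn
      (ContinuousOn.rpow_const (by fun_prop) fun x hx => Or.inl ?_)
    rw [uIcc_of_le (by linarith)] at hx
    linarith [hx.2]
  have hright : IntervalIntegrable (fun x => x ^ β * (z - x) ^ γ) volume (z / 2) z := by
    have h :=
      (intervalIntegral.intervalIntegrable_rpow' (a := 0) (b := z / 2) hγ).comp_sub_left z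
    rw [sub_zero, show z - z / 2 = z / 2 by ring] at h
    refine h.symm.continuousOn_mul
      (ContinuousOn.rpow_const (by fun_prop) fun x hx => Or.inl ?_)
    rw [uIcc_of_le (by linarith)] at hx
    linarith [hx.1]
  exact hleft.trans hright

lemma integral_rpow_mul_sub_rpow (β γ : ℝ) {z : ℝ} (hz : 0 < z) :
    ∫ x in (0 : ℝ)..z, x ^ β * (z - x) ^ γ
      = z ^ (β + γ + 1) * ∫ u in (0 : ℝ)..1, u ^ β * (1 - u) ^ γ := by
  have hscale := intervalIntegral.smul_integral_comp_mul_left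
    (fun x : ℝ => x ^ β * (z - x) ^ γ) z (a := 0) (b := 1)
  rw [mul_zero, mul_one] at hscale
  have hintegrand : EqOn (fun u : ℝ => (z * u) ^ β * (z - z * u) ^ γ)
      (fun u => z ^ (β + γ) * (u ^ β * (1 - u) ^ γ)) (uIcc 0 1) := fun u hu => by
    rw [uIcc_of_le zero_le_one] at hu
    dsimp only
    rw [show z - z * u = z * (1 - u) by ring, Real.mul_rpow hz.le hu.1,
      Real.mul_rpow hz.le (sub_nonneg.2 hu.2), Real.rpow_add hz]
    ring
  rw [← hscale, intervalIntegral.integral_congr hintegrand, intervalIntegral.integral_const_mul,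
    smul_eq_mul, Real.rpow_add_one hz.ne']
  ring

lemma tendsto_rpow_nhdsGT_zero {q : ℝ} (hq : 0 < q) :
    Tendsto (fun z : ℝ => z ^ q) (𝓝[>] 0) (𝓝 0) := by
  simpa [Real.zero_rpow hq.ne'] using
    ((Real.continuous_rpow_const hq.le).tendsto 0).mono_left nhdsWithin_le_nhds

lemma tendsto_integral_mul_sub_rpow_of_isBigO {f : ℝ → ℝ} {β γ : ℝ} (hβ : -1 < β)
    (hγ : -1 < γ) (hβγ : 0 < β + γ + 1) (hf : f =O[𝓝[>] 0] fun x => x ^ β) :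
    Tendsto (fun z => ∫ x in (0 : ℝ)..z, f x * (z - x) ^ γ) (𝓝[>] 0) (𝓝 0) := by
  obtain ⟨K, hK⟩ := hf.bound
  obtain ⟨δ, hδ, hδK⟩ := mem_nhdsGT_iff_exists_Ioo_subset.1 hK
  set B := ∫ u in (0 : ℝ)..1, u ^ β * (1 - u) ^ γ
  have hbound : Tendsto (fun z => |K * (z ^ (β + γ + 1) * B)|) (𝓝[>] 0) (𝓝 0) := by
    simpa using (((tendsto_rpow_nhdsGT_zero hβγ).mul_const B).const_mul K).abs
  refine squeeze_zero_norm' ?_ hbound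
  filter_upwards [Ioo_mem_nhdsGT hδ] with z ⟨hz, hzδ⟩
  have hpointwise : ∀ x ∈ uIoc 0 z, ‖f x * (z - x) ^ γ‖ ≤ K * (x ^ β * (z - x) ^ γ) := by
    intro x hx
    rw [uIoc_of_le hz.le] at hx
    have hzx : 0 ≤ (z - x) ^ γ := Real.rpow_nonneg (sub_nonneg.2 hx.2) γ
    have hfx : ‖f x‖ ≤ K * ‖x ^ β‖ := hδK ⟨hx.1, hx.2.trans_lt hzδ⟩
    rw [Real.norm_of_nonneg (Real.rpow_nonneg hx.1.le β)] at hfx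
    rw [norm_mul, Real.norm_of_nonneg hzx, ← mul_assoc]
    exact mul_le_mul_of_nonneg_right hfx hzx
  calc ‖∫ x in (0 : ℝ)..z, f x * (z - x) ^ γ‖
      ≤ |∫ x in (0 : ℝ)..z, K * (x ^ β * (z - x) ^ γ)| :=
        intervalIntegral.norm_integral_le_abs_of_norm_le
          ((ae_restrict_iff' measurableSet_uIoc).2 (Eventually.of_forall hpointwise))
          ((intervalIntegrable_rpow_mul_sub_rpow hβ hγ hz).const_mul K)
    _ = |K * (z ^ (β + γ + 1) * B)| := by
        rw [intervalIntegral.integral_const_mul, integral_rpow_mul_sub_rpow β γ hz]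

theorem hasDerivAt_integral_Ioi {E : Type*} [NormedAddCommGroup E] [NormedSpace ℝ E]
    [CompleteSpace E] {g : ℝ → E} {a t : ℝ} (hg : IntegrableOn g (Ioi a)) (hat : a < t)
    (hgt : ContinuousAt g t) : HasDerivAt (fun s => ∫ x in Ioi s, g x) (-g t) t := by
  have hprimitive : HasDerivAt (fun s => ∫ x in a..s, g x) (g t) t :=
    intervalIntegral.integral_hasDerivAt_right
      ((intervalIntegrable_iff_integrableOn_Ioc_of_le hat.le).2
        (hg.mono_set Ioc_subset_Ioi_self))
      (AEStronglyMeasurable.stronglyMeasurableAtFilter_of_mem hg.aestronglyMeasurable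
        (Ioi_mem_nhds hat)) hgt
  refine (hprimitive.const_sub (∫ x in Ioi a, g x)).congr_of_eventuallyEq ?_
  filter_upwards [Ioi_mem_nhds hat] with s hs
  rw [← intervalIntegral.integral_Ioi_sub_Ioi hg (le_of_lt hs), sub_sub_cancel]

/-- For `F` the distribution function of a random variable `S ≥ 0`, this is `E[(z ∨ S) ^ p]`. -/
def momentOfMax (F : ℝ → ℝ) (p z : ℝ) : ℝ :=
  z ^ p + ∫ w in Ioi (z ^ p), (1 - F (w ^ (1 / p)))

section momentOfMax

variable {F f : ℝ → ℝ} {p : ℝ}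

lemma momentOfMax_zero (hp : p ≠ 0) :
    momentOfMax F p 0 = ∫ w in Ioi 0, (1 - F (w ^ (1 / p))) := by
  simp [momentOfMax, Real.zero_rpow hp]

lemma tendsto_momentOfMax_nhdsGT_zero (hp : 0 < p)
    (hF : IntegrableOn (fun w => 1 - F (w ^ (1 / p))) (Ioi 0)) :
    Tendsto (momentOfMax F p) (𝓝[>] 0) (𝓝 (momentOfMax F p 0)) := by
  have htail := hF.continuousOn_Ici_primitive_Ioi 0 (mem_Ici.2 le_rfl)
  have hpow : Tendsto (fun z : ℝ => z ^ p) (𝓝[>] 0) (𝓝[≥] 0) :=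
    tendsto_nhdsWithin_iff.2 ⟨tendsto_rpow_nhdsGT_zero hp,
      eventually_nhdsWithin_of_forall fun z hz => Real.rpow_nonneg (le_of_lt hz) p⟩
  rw [momentOfMax_zero hp.ne', ← zero_add (∫ w in Ioi 0, _)]
  exact (tendsto_rpow_nhdsGT_zero hp).add (htail.tendsto.comp hpow)

lemma hasDerivAt_momentOfMax (hp : 0 < p)
    (hF : IntegrableOn (fun w => 1 - F (w ^ (1 / p))) (Ioi 0)) {z : ℝ} (hz : 0 < z)
    (hFz : ContinuousAt F z) : HasDerivAt (momentOfMax F p) (p * z ^ (p - 1) * F z) z := by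
  have hzp : (z ^ p) ^ (1 / p) = z := by rw [one_div, Real.rpow_rpow_inv hz.le hp.ne']
  have hcont : ContinuousAt (fun w => 1 - F (w ^ (1 / p))) (z ^ p) := by
    refine continuousAt_const.sub (ContinuousAt.comp (hzp.symm ▸ hFz) ?_)
    exact Real.continuousAt_rpow_const _ _ (Or.inl (Real.rpow_pos_of_pos hz p).ne')
  have hpow := Real.hasDerivAt_rpow_const (x := z) (p := p) (Or.inl hz.ne')
  refine (hpow.add ((hasDerivAt_integral_Ioi hF (Real.rpow_pos_of_pos hz p) hcont).comp z
    hpow)).congr_deriv ?_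
  rw [hzp]
  ring

lemma hasDerivAt_deriv_momentOfMax (hp : 0 < p)
    (hF : IntegrableOn (fun w => 1 - F (w ^ (1 / p))) (Ioi 0))
    (hf : ∀ x ∈ Ioi 0, HasDerivAt F (f x) x) {x : ℝ} (hx : 0 < x) :
    HasDerivAt (deriv (momentOfMax F p))
      (p * (p - 1) * x ^ (p - 2) * F x + p * x ^ (p - 1) * f x) x := by
  have hderiv : deriv (momentOfMax F p) =ᶠ[𝓝 x] fun y => p * y ^ (p - 1) * F y := by
    filter_upwards [Ioi_mem_nhds hx] with y hy
    exact (hasDerivAt_momentOfMax hp hF hy (hf y hy).continuousAt).deriv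
  refine HasDerivAt.congr_of_eventuallyEq ?_ hderiv
  refine (((Real.hasDerivAt_rpow_const (Or.inl hx.ne')).const_mul p).mul
    (hf x hx)).congr_deriv ?_
  rw [show p - 1 - 1 = p - 2 by ring]
  ring

lemma isBigO_deriv_deriv_momentOfMax (hp : 0 < p)
    (hF : IntegrableOn (fun w => 1 - F (w ^ (1 / p))) (Ioi 0))
    (hf : ∀ x ∈ Ioi 0, HasDerivAt F (f x) x) {a : ℝ} (hFa : F =O[𝓝[>] 0] fun x => x ^ a)
    (hfa : f =O[𝓝[>] 0] fun x => x ^ (a - 1)) :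
    deriv (deriv (momentOfMax F p)) =O[𝓝[>] 0] fun x => x ^ (p + a - 2) := by
  have hrpow : ∀ b c : ℝ, b + c = p + a - 2 →
      (fun x : ℝ => x ^ b * x ^ c) =ᶠ[𝓝[>] 0] fun x => x ^ (p + a - 2) := by
    intro b c hbc
    filter_upwards [self_mem_nhdsWithin] with x hx using hbc ▸ (Real.rpow_add hx b c).symm
  have hFterm := (((isBigO_refl (fun x : ℝ => x ^ (p - 2)) _).mul hFa).trans_eventuallyEq
    (hrpow _ _ (by ring))).const_mul_left (p * (p - 1))
  have hfterm := (((isBigO_refl (fun x : ℝ => x ^ (p - 1)) _).mul hfa).trans_eventuallyEq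
    (hrpow _ _ (by ring))).const_mul_left p
  refine (hFterm.add hfterm).congr' ?_ EventuallyEq.rfl
  filter_upwards [self_mem_nhdsWithin] with x hx
  rw [(hasDerivAt_deriv_momentOfMax hp hF hf hx).deriv]
  ring

lemma tendsto_mul_deriv_momentOfMax (hp : 0 < p)
    (hF : IntegrableOn (fun w => 1 - F (w ^ (1 / p))) (Ioi 0))
    (hFc : ∀ x ∈ Ioi 0, ContinuousAt F x) (hFb : IsBoundedUnder (· ≤ ·) (𝓝[>] 0) (norm ∘ F)) :
    Tendsto (fun z => z * deriv (momentOfMax F p) z) (𝓝[>] 0) (𝓝 0) := by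
  have hpow : Tendsto (fun z : ℝ => p * z ^ p) (𝓝[>] 0) (𝓝 0) := by
    simpa using (tendsto_rpow_nhdsGT_zero hp).const_mul p
  refine (hpow.zero_mul_isBoundedUnder_le hFb).congr' ?_
  filter_upwards [self_mem_nhdsWithin] with z (hz : 0 < z)
  rw [(hasDerivAt_momentOfMax hp hF hz (hFc z hz)).deriv, Real.rpow_sub_one hz.ne']
  field_simp

end momentOfMax

section Tail

variable {Ω : Type*} [MeasurableSpace Ω] {μ : Measure Ω}

lemma integrableOn_measureReal_lt {X : Ω → ℝ} (hX : Integrable X μ) (hX0 : 0 ≤ᵐ[μ] X) :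
    IntegrableOn (fun t => μ.real {ω | t < X ω}) (Ioi 0) := by
  have hanti : Antitone fun t => μ {ω | t < X ω} :=
    fun s t hst => measure_mono fun ω h => hst.trans_lt h
  refine ⟨hanti.measurable.ennreal_toReal.aestronglyMeasurable, ?_⟩
  have hfinite : ∀ t ∈ Ioi (0 : ℝ), ENNReal.ofReal (μ.real {ω | t < X ω}) = μ {ω | t < X ω} :=
    fun t ht => ENNReal.ofReal_toReal (hX.measure_gt_lt_top ht).ne
  rw [hasFiniteIntegral_iff_ofReal (Eventually.of_forall fun t => measureReal_nonneg),
    setLIntegral_congr_fun measurableSet_Ioi hfinite,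
    ← lintegral_eq_lintegral_meas_lt μ hX0 hX.aemeasurable]
  exact hX.lintegral_lt_top

variable [IsProbabilityMeasure μ] {S : Ω → ℝ} {p : ℝ}

lemma one_sub_measureReal_le_rpow_inv (hp : 0 < p) (hS : ∀ ω, 0 ≤ S ω)
    (hSp : AEMeasurable (fun ω => S ω ^ p) μ) {t : ℝ} (ht : 0 < t) :
    1 - μ.real {ω | S ω ≤ t ^ (1 / p)} = μ.real {ω | t < S ω ^ p} := by
  have hcompl : {ω | S ω ≤ t ^ (1 / p)} = {ω | t < S ω ^ p}ᶜ := by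
    ext ω
    show S ω ≤ _ ↔ ¬t < S ω ^ p
    rw [not_lt, one_div,
      ← Real.rpow_le_rpow_iff (hS ω) (Real.rpow_nonneg ht.le _) hp,
      Real.rpow_inv_rpow ht.le hp.ne']
  rw [hcompl, probReal_compl_eq_one_sub₀ (nullMeasurableSet_lt aemeasurable_const hSp),
    sub_sub_cancel]

lemma integrableOn_one_sub_cdf_rpow (hp : 0 < p) (hS : ∀ ω, 0 ≤ S ω)
    (hSp : Integrable (fun ω => S ω ^ p) μ) :
    IntegrableOn (fun w => 1 - μ.real {ω | S ω ≤ w ^ (1 / p)}) (Ioi 0) := by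
  have hSp0 : 0 ≤ᵐ[μ] fun ω => S ω ^ p := Eventually.of_forall fun ω => Real.rpow_nonneg (hS ω) p
  exact (integrableOn_measureReal_lt hSp hSp0).congr_fun
    (fun _ ht => (one_sub_measureReal_le_rpow_inv hp hS hSp.aemeasurable ht).symm)
    measurableSet_Ioi

lemma integral_one_sub_cdf_rpow (hp : 0 < p) (hS : ∀ ω, 0 ≤ S ω)
    (hSp : Integrable (fun ω => S ω ^ p) μ) :
    ∫ w in Ioi 0, (1 - μ.real {ω | S ω ≤ w ^ (1 / p)}) = ∫ ω, S ω ^ p ∂μ := by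
  rw [hSp.integral_eq_integral_meas_lt (Eventually.of_forall fun ω => Real.rpow_nonneg (hS ω) p)]
  exact setIntegral_congr_fun measurableSet_Ioi
    fun _ ht => one_sub_measureReal_le_rpow_inv hp hS hSp.aemeasurable ht

end Tail

theorem H_limit_at_zero_general
    {Ω : Type*} [MeasureSpace Ω] [IsProbabilityMeasure (volume : Measure Ω)]
    {α p c : ℝ} (hα : α ∈ Set.Ioo (1:ℝ) 2) (hp : p ∈ Set.Ioo 1 α)
    {S : Ω → ℝ} (hSpos : ∀ ω, 0 < S ω)
    (hSp : Integrable (fun ω => S ω ^ p))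
    {Fs fs : ℝ → ℝ}
    -- `Fs` is the distribution function of `S`
    (hFs : ∀ z, Fs z = ((volume : Measure Ω) {ω | S ω ≤ z}).toReal)
    -- `Fs` is continuously differentiable on `(0,∞)` with density `fs`
    (hfs : ∀ z ∈ Set.Ioi (0:ℝ), HasDerivAt Fs (fs z) z)
    -- asymptotics at zero
    {Cf CF : ℝ}
    (hfs0 : Tendsto (fun z => fs z / (Cf * z ^ (α - 2))) (𝓝[>] (0:ℝ)) (𝓝 1))
    (hFs0 : Tendsto (fun z => Fs z / (CF * z ^ (α - 1))) (𝓝[>] (0:ℝ)) (𝓝 1)) :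
    let G : ℝ → ℝ := fun z => z ^ p + ∫ w in Set.Ioi (z ^ p), (1 - Fs (w ^ (1 / p)))
    let H : ℝ → ℝ := fun z => z * deriv G z
      + (c / (α - 1)) * (∫ x in (0:ℝ)..z, deriv (deriv G) x * (z - x) ^ (1 - α))
      - p * G z
    Tendsto H (𝓝[>] (0:ℝ)) (𝓝 (-p * G 0)) ∧
    G 0 = (∫ ω, S ω ^ p) ∧
    -p * (∫ ω, S ω ^ p) < 0 := by
  intro G H
  obtain ⟨hα1, hα2⟩ := hα
  obtain ⟨hp1, hpα⟩ := hp
  have hp0 : 0 < p := by linarith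
  have hS : ∀ ω, 0 ≤ S ω := fun ω => (hSpos ω).le
  obtain rfl : Fs = fun z => (volume : Measure Ω).real {ω | S ω ≤ z} := funext hFs
  set F := fun z => (volume : Measure Ω).real {ω | S ω ≤ z}
  have hint : IntegrableOn (fun w => 1 - F (w ^ (1 / p))) (Ioi 0) :=
    integrableOn_one_sub_cdf_rpow hp0 hS hSp
  have hG0 : G 0 = ∫ ω, S ω ^ p :=
    (momentOfMax_zero (F := F) hp0.ne').trans (integral_one_sub_cdf_rpow hp0 hS hSp)
  have hFO : F =O[𝓝[>] 0] fun x => x ^ (α - 1) :=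
    (isEquivalent_of_tendsto_one hFs0).isBigO.trans (isBigO_const_mul_self _ _ _)
  have hfO : fs =O[𝓝[>] 0] fun x => x ^ (α - 1 - 1) := by
    rw [sub_sub, one_add_one_eq_two]
    exact (isEquivalent_of_tendsto_one hfs0).isBigO.trans (isBigO_const_mul_self _ _ _)
  have hFbdd : IsBoundedUnder (· ≤ ·) (𝓝[>] 0) (norm ∘ F) :=
    isBoundedUnder_of ⟨1, fun _ => (Real.norm_of_nonneg measureReal_nonneg).trans_le
      measureReal_le_one⟩
  have hzG' := tendsto_mul_deriv_momentOfMax hp0 hint (fun z hz => (hfs z hz).continuousAt) hFbdd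
  have hfrac := tendsto_integral_mul_sub_rpow_of_isBigO (γ := 1 - α) (by linarith) (by linarith)
    (by linarith) (isBigO_deriv_deriv_momentOfMax hp0 hint hfs hFO hfO)
  have hG := tendsto_momentOfMax_nhdsGT_zero hp0 hint
  have hpos : 0 < ∫ ω, S ω ^ p :=
    (integral_pos_iff_support_of_nonneg (fun ω => (Real.rpow_pos_of_pos (hSpos ω) p).le) hSp).2
      (by simp [Function.support, fun ω => (Real.rpow_pos_of_pos (hSpos ω) p).ne'])
  refine ⟨?_, hG0, by nlinarith⟩
  have := (hzG'.add (hfrac.const_mul (c / (α - 1)))).sub (hG.const_mul p)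
  rw [mul_zero, add_zero, zero_sub, ← neg_mul] at this
  exact this

theorem H_limit_at_zero
    {Ω : Type*} [MeasureSpace Ω] [IsProbabilityMeasure (volume : Measure Ω)]
    {α p c : ℝ} (hα : α ∈ Set.Ioo (1:ℝ) 2) (hp : p ∈ Set.Ioo 1 α) (hc : 0 < c)
    {S : Ω → ℝ} (hSm : Measurable S) (hSpos : ∀ ω, 0 < S ω)
    (hSp : Integrable (fun ω => S ω ^ p))
    {Fs fs : ℝ → ℝ}
    -- `Fs` is the distribution function of `S`
    (hFs : ∀ z, Fs z = ((volume : Measure Ω) {ω | S ω ≤ z}).toReal)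
    -- `Fs` is continuously differentiable on `(0,∞)` with density `fs`
    (hfs : ∀ z ∈ Set.Ioi (0:ℝ), HasDerivAt Fs (fs z) z)
    (hfsc : ContinuousOn fs (Set.Ioi 0))
    -- asymptotics at zero
    {Cf CF : ℝ} (hCf : 0 < Cf) (hCF : 0 < CF)
    (hfs0 : Tendsto (fun z => fs z / (Cf * z ^ (α - 2))) (𝓝[>] (0:ℝ)) (𝓝 1))
    (hFs0 : Tendsto (fun z => Fs z / (CF * z ^ (α - 1))) (𝓝[>] (0:ℝ)) (𝓝 1)) :
    let G : ℝ → ℝ := fun z => z ^ p + ∫ w in Set.Ioi (z ^ p), (1 - Fs (w ^ (1 / p)))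
    let H : ℝ → ℝ := fun z => z * deriv G z
      + (c / (α - 1)) * (∫ x in (0:ℝ)..z, deriv (deriv G) x * (z - x) ^ (1 - α))
      - p * G z
    Tendsto H (𝓝[>] (0:ℝ)) (𝓝 (-p * G 0)) ∧
    G 0 = (∫ ω, S ω ^ p) ∧
    -p * (∫ ω, S ω ^ p) < 0 :=
  H_limit_at_zero_general hα hp hSpos hSp hFs hfs hfs0 hFs0
end
end
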